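/- arXiv:2011.04369 — 13 statements merged into one kernel-verified Lean document; each statement's English description precedes it below -/
import Mathlib

section
/- Let p be a probability mass function on the integers with support {L,...,R} (L finite). If a random variable X with values in {L,...,R} has pmf p, then for every integer k with L ≤ k ≤ R, p(k) = E[-(p(X+1)-p(X))/p(X) · 1{X ≥ k}]. -/
/-!
For `j ≥ k ≥ L` the summand `-(Δ⁺p(j)/p(j)) · p(j)` equals `p j - p (j + 1)`: inside the support
this is algebra, and beyond it both `p j` and `p (j + 1)` vanish because the support is an interval
(so the junk value of `x / 0` is harmless). The expectation is therefore the telescoping series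
`∑_{j ≥ k} (p j - p (j + 1))`, whose sum is `p k` since `p` is summable.
-/

theorem Summable.hasSum_sub_succ {G : Type*} [TopologicalSpace G] [AddCommGroup G]
    [IsTopologicalAddGroup G] {f : ℕ → G} (hf : Summable f) :
    HasSum (fun n => f n - f (n + 1)) (f 0) := by
  have hshift : HasSum (fun n => f (n + 1)) (∑' n, f n - f 0) := by
    simpa using (hasSum_nat_add_iff' 1).2 hf.hasSum
  simpa using hf.hasSum.sub hshift

theorem Summable.hasSum_ite_le_sub_succ {G : Type*} [UniformSpace G] [AddCommGroup G]
    [IsUniformAddGroup G] [CompleteSpace G] {f : ℤ → G} (hf : Summable f) (k : ℤ) :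
    HasSum (fun j => if k ≤ j then f j - f (j + 1) else 0) (f k) := by
  have hinj : Function.Injective (fun n : ℕ => k + n) := fun a b h => by simpa using h
  refine (hinj.hasSum_iff fun j hj => ?_).1 ?_
  · have hkj : ¬ k ≤ j := fun hkj => hj ⟨(j - k).toNat, by simp only; omega⟩
    simp [hkj]
  · have hfk : Summable (fun n : ℕ => f (k + n)) := hf.comp_injective hinj
    convert hfk.hasSum_sub_succ using 1
    · ext n
      simp [add_assoc]
    · simp

theorem neg_div_mul_self_of_eq_zero_imp {K : Type*} [Field K] {a b : K}
    (h : a = 0 → b = 0) : -((b - a) / a) * a = a - b := by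
  rcases eq_or_ne a 0 with ha | ha
  · simp [ha, h ha]
  · field_simp
    ring

theorem eq_zero_succ_of_eq_zero {p : ℤ → ℝ} {L : ℤ} {R : WithTop ℤ}
    (hsupp : ∀ k : ℤ, 0 < p k ↔ (L ≤ k ∧ (k : WithTop ℤ) ≤ R)) (hnonneg : ∀ k, 0 ≤ p k)
    {j : ℤ} (hLj : L ≤ j) (hj : p j = 0) : p (j + 1) = 0 := by
  refine ((hnonneg _).eq_or_lt.resolve_right fun hpos => ?_).symm
  have hjR : (j : WithTop ℤ) ≤ R :=
    le_trans (WithTop.coe_le_coe.2 (Int.le_add_one le_rfl)) ((hsupp _).1 hpos).2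
  exact ((hsupp j).2 ⟨hLj, hjR⟩).ne' hj

theorem stmt_0_general (p : ℤ → ℝ) (L : ℤ) (R : WithTop ℤ)
    (hsupp : ∀ k : ℤ, 0 < p k ↔ (L ≤ k ∧ (k : WithTop ℤ) ≤ R))
    (hnonneg : ∀ k, 0 ≤ p k)
    (hsum : ∑' k : ℤ, p k = 1) :
    ∀ k : ℤ, L ≤ k → (k : WithTop ℤ) ≤ R →
      p k = ∑' j : ℤ, (-((p (j + 1) - p j) / p j) * (if k ≤ j then (1 : ℝ) else 0)) * p j := by
  intro k hLk _
  have hp : Summable p := by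
    by_contra h
    simp [tsum_eq_zero_of_not_summable h] at hsum
  have hsummand : ∀ j : ℤ, (-((p (j + 1) - p j) / p j) * (if k ≤ j then (1 : ℝ) else 0)) * p j
      = if k ≤ j then p j - p (j + 1) else 0 := by
    intro j
    split_ifs with hkj
    · rw [mul_one]
      exact neg_div_mul_self_of_eq_zero_imp
        (eq_zero_succ_of_eq_zero hsupp hnonneg (hLk.trans hkj))
    · simp
  rw [tsum_congr hsummand, (hp.hasSum_ite_le_sub_succ k).tsum_eq]

/-- Easy direction of the discrete Stein pmf identity: if a random variable with values in
`{L,...,R}` has pmf `p`, then `p k = E[-(Δ⁺p(X)/p(X)) · 1{X ≥ k}]` for all `L ≤ k ≤ R`. -/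
theorem stmt_0 (p : ℤ → ℝ) (L : ℤ) (R : WithTop ℤ)
    (hsupp : ∀ k : ℤ, 0 < p k ↔ (L ≤ k ∧ (k : WithTop ℤ) ≤ R))
    (hnonneg : ∀ k, 0 ≤ p k)
    (hsum : ∑' k : ℤ, p k = 1)
    (hmean : Summable (fun k : ℤ => |(k : ℝ)| * p k))
    (hint : Summable (fun k : ℤ => |(p (k + 1) - p k) / p k * (k : ℝ)| * p k)) :
    ∀ k : ℤ, L ≤ k → (k : WithTop ℤ) ≤ R →
      p k = ∑' j : ℤ, (-((p (j + 1) - p j) / p j) * (if k ≤ j then (1 : ℝ) else 0)) * p j :=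
  stmt_0_general p L R hsupp hnonneg hsum
end

section
/- Let p be a pmf on {L,...,R} with L > -∞ satisfying conditions (C1)-(C3), and let X be a random variable with values in {L,...,R} such that E|(Δ⁺p(X)/p(X))·X| < ∞. If the pmf ρ of X satisfies ρ(k) = E[-(Δ⁺p(X)/p(X))·1{X ≥ k}] for all k ≥ L, then ρ = p, i.e. X has pmf p. -/
/-!
Subtracting the Stein identity at `k + 1` from the one at `k` leaves a single term (the series may be
split because `|Δ⁺p(j) / p j| ≤ |Δ⁺p(j) / p j · j|` for `j ≠ 0`):
`ρ k - ρ (k + 1) = -(Δ⁺p(k) / p k) ρ k`, i.e. `ρ (k + 1) p k = ρ k p (k + 1)`. Hence `ρ / p` is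
constant on the support of `p`, `ρ` vanishes off it, and both sum to one, so `ρ = p`.
-/

lemma summable_mul_of_summable_abs_mul_intCast_mul {b ρ : ℤ → ℝ} (hρ : ∀ k, 0 ≤ ρ k)
    (h : Summable fun k : ℤ => |b k * k| * ρ k) : Summable fun k => b k * ρ k := by
  refine Summable.of_norm_bounded_eventually h ?_
  filter_upwards [(Set.finite_singleton (0 : ℤ)).compl_mem_cofinite] with k hk
  have hk1 : (1 : ℝ) ≤ |(k : ℝ)| := by exact_mod_cast Int.one_le_abs (by simpa using hk)
  rw [Real.norm_eq_abs, abs_mul, abs_of_nonneg (hρ k), abs_mul]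
  exact mul_le_mul_of_nonneg_right (le_mul_of_one_le_right (abs_nonneg _) hk1) (hρ k)

lemma tsum_mul_ite_le_sub_tsum_mul_ite_succ_le {a f : ℤ → ℝ} (h : Summable fun j => a j * f j)
    (k : ℤ) :
    ∑' j : ℤ, (a j * (if k ≤ j then (1 : ℝ) else 0)) * f j -
      ∑' j : ℤ, (a j * (if k + 1 ≤ j then (1 : ℝ) else 0)) * f j = a k * f k := by
  have tail_summable : ∀ m : ℤ,
      Summable fun j : ℤ => (a j * (if m ≤ j then (1 : ℝ) else 0)) * f j := fun m =>
    (h.indicator {j | m ≤ j}).congr fun j => by by_cases hj : m ≤ j <;> simp [hj]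
  rw [← (tail_summable k).tsum_sub (tail_summable (k + 1)), ← tsum_ite_eq k (fun j => a j * f j)]
  congr 1 with j
  by_cases hjk : j = k
  · subst hjk; simp
  · by_cases hkj : k ≤ j
    · simp [hjk, hkj, show k + 1 ≤ j by omega]
    · simp [hjk, hkj, show ¬ k + 1 ≤ j by omega]

lemma succ_mul_eq_mul_of_stein_identity {p ρ : ℤ → ℝ} {L : ℤ} (hρ : ∀ k, 0 ≤ ρ k)
    (hint : Summable fun k : ℤ => |(p (k + 1) - p k) / p k * (k : ℝ)| * ρ k)
    (hid : ∀ k : ℤ, L ≤ k →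
      ρ k = ∑' j : ℤ, (-((p (j + 1) - p j) / p j) * (if k ≤ j then (1 : ℝ) else 0)) * ρ j)
    {k : ℤ} (hk : L ≤ k) (hpk : p k ≠ 0) : ρ (k + 1) * p k = ρ k * p (k + 1) := by
  have hsummable : Summable fun j => -((p (j + 1) - p j) / p j) * ρ j := by
    simpa only [neg_mul] using (summable_mul_of_summable_abs_mul_intCast_mul hρ hint).neg
  have hρ_sub : ρ k - ρ (k + 1) = -((p (k + 1) - p k) / p k) * ρ k := by
    rw [← tsum_mul_ite_le_sub_tsum_mul_ite_succ_le hsummable k, ← hid k hk,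
      ← hid (k + 1) (by omega)]
  have hcancel : (p (k + 1) - p k) / p k * p k = p (k + 1) - p k := div_mul_cancel₀ _ hpk
  linear_combination (-p k) * hρ_sub + ρ k * hcancel

lemma mul_eq_mul_of_succ_mul_eq_mul {p ρ : ℤ → ℝ} {L : ℤ} (hlow : ∀ k < L, p k = 0)
    (hgap : ∀ k, L ≤ k → p k = 0 → p (k + 1) = 0) (hvan : ∀ k, p k = 0 → ρ k = 0)
    (hstep : ∀ k, L ≤ k → p k ≠ 0 → ρ (k + 1) * p k = ρ k * p (k + 1)) (k : ℤ) :
    ρ k * p L = ρ L * p k := by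
  rcases lt_or_ge k L with hk | hk
  · rw [hlow k hk, hvan k (hlow k hk)]; ring
  induction k, hk using Int.leInduction with
  | base => ring
  | succ k hk ih =>
    by_cases hpk : p k = 0
    · rw [hgap k hk hpk, hvan _ (hgap k hk hpk)]; ring
    · apply mul_right_cancel₀ hpk
      linear_combination p L * hstep k hk hpk + p (k + 1) * ih

lemma eq_of_mul_eq_mul_of_tsum_eq_one {ι : Type*} {p ρ : ι → ℝ} {i : ι} (hpi : p i ≠ 0)
    (h : ∀ k, ρ k * p i = ρ i * p k) (hρ : ∑' k, ρ k = 1) (hp : ∑' k, p k = 1) : ρ = p := by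
  have hi : ∑' k, ρ k * p i = ∑' k, ρ i * p k := tsum_congr h
  rw [tsum_mul_right, tsum_mul_left, hρ, hp, one_mul, mul_one] at hi
  funext k
  exact mul_right_cancel₀ hpi (by rw [h k, ← hi, mul_comm])

theorem stmt_1_general (p ρ : ℤ → ℝ) (L : ℤ) (R : WithTop ℤ)
    (hsupp : ∀ k : ℤ, 0 < p k ↔ (L ≤ k ∧ (k : WithTop ℤ) ≤ R))
    (hnonneg : ∀ k, 0 ≤ p k)
    (hsum : ∑' k : ℤ, p k = 1)
    (hρnonneg : ∀ k, 0 ≤ ρ k)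
    (hρsum : ∑' k : ℤ, ρ k = 1)
    (hρsupp : ∀ k : ℤ, ρ k ≠ 0 → (L ≤ k ∧ (k : WithTop ℤ) ≤ R))
    (hint : Summable (fun k : ℤ => |(p (k + 1) - p k) / p k * (k : ℝ)| * ρ k))
    (hid : ∀ k : ℤ, L ≤ k →
      ρ k = ∑' j : ℤ, (-((p (j + 1) - p j) / p j) * (if k ≤ j then (1 : ℝ) else 0)) * ρ j) :
    ρ = p := by
  have hpos_iff : ∀ k, p k ≠ 0 ↔ L ≤ k ∧ (k : WithTop ℤ) ≤ R := fun k =>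
    (hnonneg k).lt_iff_ne'.symm.trans (hsupp k)
  have hpL : p L ≠ 0 := by
    obtain ⟨k, hk⟩ : ∃ k, p k ≠ 0 := by
      by_contra! h
      simp [h] at hsum
    obtain ⟨hLk, hkR⟩ := (hpos_iff k).1 hk
    exact (hpos_iff L).2 ⟨le_rfl, le_trans (by exact_mod_cast hLk) hkR⟩
  have hlow : ∀ k < L, p k = 0 := fun k hk => by
    by_contra h
    exact not_le.2 hk ((hpos_iff k).1 h).1
  have hgap : ∀ k, L ≤ k → p k = 0 → p (k + 1) = 0 := fun k hk hpk => by
    by_contra h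
    have hkR : (k : WithTop ℤ) ≤ R :=
      le_trans (WithTop.coe_le_coe.2 (Int.le_add_one le_rfl)) ((hpos_iff _).1 h).2
    exact (hpos_iff k).2 ⟨hk, hkR⟩ hpk
  have hvan : ∀ k, p k = 0 → ρ k = 0 := fun k hpk => by
    by_contra h
    exact (hpos_iff k).2 (hρsupp k h) hpk
  exact eq_of_mul_eq_mul_of_tsum_eq_one hpL
    (mul_eq_mul_of_succ_mul_eq_mul hlow hgap hvan
      fun _ hk hpk => succ_mul_eq_mul_of_stein_identity hρnonneg hint hid hk hpk) hρsum hsum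

/-- Converse direction of the discrete Stein pmf characterization (Theorem 3.1): if the pmf ρ
of a random variable with values in `{L,...,R}` satisfies the Stein identity, then ρ = p. -/
theorem stmt_1 (p ρ : ℤ → ℝ) (L : ℤ) (R : WithTop ℤ)
    (hsupp : ∀ k : ℤ, 0 < p k ↔ (L ≤ k ∧ (k : WithTop ℤ) ≤ R))
    (hnonneg : ∀ k, 0 ≤ p k)
    (hsum : ∑' k : ℤ, p k = 1)
    (hC2 : ∃ M : ℝ, ∀ k : ℤ, L ≤ k → ((k + 1 : ℤ) : WithTop ℤ) ≤ R →
      |(p (k + 1) - p k) * min (∑' ℓ : ℤ, if ℓ ≤ k then p ℓ else 0)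
        (1 - ∑' ℓ : ℤ, if ℓ ≤ k then p ℓ else 0) / (p k * p (k + 1))| ≤ M)
    (hC3 : Summable (fun k : ℤ => |(k : ℝ)| * p k))
    (hρnonneg : ∀ k, 0 ≤ ρ k)
    (hρsum : ∑' k : ℤ, ρ k = 1)
    (hρsupp : ∀ k : ℤ, ρ k ≠ 0 → (L ≤ k ∧ (k : WithTop ℤ) ≤ R))
    (hint : Summable (fun k : ℤ => |(p (k + 1) - p k) / p k * (k : ℝ)| * ρ k))
    (hid : ∀ k : ℤ, L ≤ k →
      ρ k = ∑' j : ℤ, (-((p (j + 1) - p j) / p j) * (if k ≤ j then (1 : ℝ) else 0)) * ρ j) :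
    ρ = p :=
  stmt_1_general p ρ L R hsupp hnonneg hsum hρnonneg hρsum hρsupp hint hid
end

section
/- Let p be a pmf on {L,...,R} with R < ∞ (L may be -∞) satisfying the backward analogues of (C1)-(C3). A random variable X supported on {L,...,R} with E|(Δ⁻p(X)/p(X))·X| < ∞ has pmf p if and only if its pmf ρ satisfies ρ(k) = E[(Δ⁻p(X)/p(X))·1{X ≤ k}] for all k ≤ R, where Δ⁻p(k) = p(k) - p(k-1). -/
/-!
Evaluating the identity at `k` and `k - 1` and subtracting gives
`ρ k - ρ (k - 1) = (Δ⁻p k / p k) ρ k`, i.e. `ρ (k - 1) / p (k - 1) = ρ k / p k` on the support.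
So `ρ / p` is constant on `{L, …, R}`, both vanish outside it, and normalisation forces `ρ = p`.
Conversely, for `ρ = p` the right-hand side is `∑_{j ≤ k} Δ⁻p j`, which telescopes to `p k`
because `p j → 0` as `j → -∞`.
-/

section Truncation

variable {E : Type*} [NormedAddCommGroup E] [CompleteSpace E] {f : ℤ → E}

lemma Summable.ite_le (hf : Summable f) (k : ℤ) :
    Summable fun j => if j ≤ k then f j else 0 :=
  (hf.indicator (Set.Iic k)).congr fun j => by simp [Set.indicator_apply]

lemma tsum_ite_le_eq_tsum_ite_le_sub_one_add (hf : Summable f) (k : ℤ) :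
    ∑' j, (if j ≤ k then f j else 0) = ∑' j, (if j ≤ k - 1 then f j else 0) + f k := by
  rw [(hf.ite_le k).tsum_eq_add_tsum_ite k, if_pos le_rfl, add_comm]
  congr 1
  exact tsum_congr fun j => by split_ifs <;> first | rfl | omega

lemma tsum_ite_le_telescope (hf : Summable f) (k : ℤ) :
    ∑' j, (if j ≤ k then f j - f (j - 1) else 0) = f k := by
  have hf' : Summable fun j => f (j - 1) := (Equiv.subRight (1 : ℤ)).summable_iff.2 hf
  have hshift : ∑' j, (if j ≤ k then f (j - 1) else 0)
      = ∑' j, (if j ≤ k - 1 then f j else 0) := by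
    simpa using (Equiv.subRight (1 : ℤ)).tsum_eq fun j => if j ≤ k - 1 then f j else 0
  calc ∑' j, (if j ≤ k then f j - f (j - 1) else 0)
      = ∑' j, (if j ≤ k then f j else 0) - ∑' j, (if j ≤ k then f (j - 1) else 0) := by
        rw [← (hf.ite_le k).tsum_sub (hf'.ite_le k)]
        exact tsum_congr fun j => by split_ifs <;> simp
    _ = f k := by
        rw [hshift, tsum_ite_le_eq_tsum_ite_le_sub_one_add hf k]
        abel

end Truncation

lemma summable_mul_of_summable_abs_mul_intCast {a w : ℤ → ℝ} (hw : ∀ k, 0 ≤ w k)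
    (h : Summable fun k : ℤ => |a k * k| * w k) : Summable fun k => a k * w k := by
  refine h.of_norm_bounded_eventually ?_
  filter_upwards [(Set.finite_singleton (0 : ℤ)).compl_mem_cofinite] with k hk
  have hk1 : (1 : ℝ) ≤ |(k : ℝ)| := by exact_mod_cast Int.one_le_abs hk
  calc ‖a k * w k‖ = |a k| * 1 * w k := by
        rw [Real.norm_eq_abs, abs_mul, abs_of_nonneg (hw k), mul_one]
    _ ≤ |a k| * |(k : ℝ)| * w k := by gcongr; exact hw k
    _ = |a k * k| * w k := by rw [abs_mul]

lemma eq_of_le_of_forall_sub_one_eq {α : Type*} {f : ℤ → α} {L : WithBot ℤ} {R : ℤ}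
    (hf : ∀ k ≤ R, L ≤ ((k - 1 : ℤ) : WithBot ℤ) → f (k - 1) = f k) :
    ∀ k ≤ R, L ≤ (k : WithBot ℤ) → f k = f R := by
  intro k hk
  induction k, hk using Int.leInductionDown with
  | base => exact fun _ => rfl
  | pred n hn ih =>
    intro hL
    rw [hf n hn hL, ih (hL.trans (WithBot.coe_le_coe.2 (by omega)))]

section Support

variable {p : ℤ → ℝ} {L : WithBot ℤ} {R : ℤ}

lemma eq_zero_of_notMem_support (hsupp : ∀ k : ℤ, 0 < p k ↔ (L ≤ (k : WithBot ℤ) ∧ k ≤ R))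
    (hnonneg : ∀ k, 0 ≤ p k) {k : ℤ} (hk : ¬ (L ≤ (k : WithBot ℤ) ∧ k ≤ R)) : p k = 0 :=
  le_antisymm (not_lt.1 fun h => hk ((hsupp k).1 h)) (hnonneg k)

theorem tsum_ite_le_backward_score_mul_self
    (hsupp : ∀ k : ℤ, 0 < p k ↔ (L ≤ (k : WithBot ℤ) ∧ k ≤ R))
    (hnonneg : ∀ k, 0 ≤ p k) (hp : Summable p) {k : ℤ} (hk : k ≤ R) :
    ∑' j, (if j ≤ k then (p j - p (j - 1)) / p j * p j else 0) = p k := by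
  rw [← tsum_ite_le_telescope hp k]
  refine tsum_congr fun j => ?_
  split_ifs with hj
  · by_cases hL : L ≤ (j : WithBot ℤ)
    · exact div_mul_cancel₀ _ ((hsupp j).2 ⟨hL, hj.trans hk⟩).ne'
    · have hpj := eq_zero_of_notMem_support hsupp hnonneg (k := j) fun h => hL h.1
      have hpj1 := eq_zero_of_notMem_support hsupp hnonneg (k := j - 1)
        fun h => hL (h.1.trans (WithBot.coe_le_coe.2 (by omega)))
      simp [hpj, hpj1]
  · rfl

lemma div_sub_one_eq_div_of_backward_step {ρ : ℤ → ℝ} {k : ℤ} (hpk : 0 < p k)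
    (hpk₁ : 0 < p (k - 1)) (h : ρ k = ρ (k - 1) + (p k - p (k - 1)) / p k * ρ k) :
    ρ (k - 1) / p (k - 1) = ρ k / p k := by
  rw [div_eq_div_iff hpk₁.ne' hpk.ne']
  field_simp at h
  linarith

theorem eq_of_forall_eq_tsum_ite_le_backward_score {ρ : ℤ → ℝ}
    (hsupp : ∀ k : ℤ, 0 < p k ↔ (L ≤ (k : WithBot ℤ) ∧ k ≤ R)) (hnonneg : ∀ k, 0 ≤ p k)
    (hsum : ∑' k, p k = 1) (hρsum : ∑' k, ρ k = 1)
    (hρsupp : ∀ k : ℤ, ρ k ≠ 0 → (L ≤ (k : WithBot ℤ) ∧ k ≤ R))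
    (hg : Summable fun j => (p j - p (j - 1)) / p j * ρ j)
    (H : ∀ k ≤ R, ρ k = ∑' j, if j ≤ k then (p j - p (j - 1)) / p j * ρ j else 0) :
    ρ = p := by
  have hstep : ∀ k ≤ R, L ≤ ((k - 1 : ℤ) : WithBot ℤ) →
      ρ (k - 1) / p (k - 1) = ρ k / p k := by
    intro k hk hL
    have hLk : L ≤ (k : WithBot ℤ) := hL.trans (WithBot.coe_le_coe.2 (by omega))
    refine div_sub_one_eq_div_of_backward_step ((hsupp k).2 ⟨hLk, hk⟩)
      ((hsupp (k - 1)).2 ⟨hL, by omega⟩) ?_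
    have := tsum_ite_le_eq_tsum_ite_le_sub_one_add hg k
    rwa [← H k hk, ← H (k - 1) (by omega)] at this
  obtain ⟨c, hprop⟩ : ∃ c, ∀ k, ρ k = c * p k := by
    refine ⟨ρ R / p R, fun k => ?_⟩
    by_cases hk : L ≤ (k : WithBot ℤ) ∧ k ≤ R
    · have hratio := eq_of_le_of_forall_sub_one_eq (f := fun k => ρ k / p k) hstep k hk.2 hk.1
      rw [← hratio, div_mul_cancel₀ _ ((hsupp k).2 hk).ne']
    · rw [eq_zero_of_notMem_support hsupp hnonneg hk, not_imp_comm.1 (hρsupp k) hk, mul_zero]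
  have hc : c = 1 := by
    have h : ∑' k, ρ k = c * ∑' k, p k := (tsum_congr hprop).trans tsum_mul_left
    rwa [hρsum, hsum, mul_one, eq_comm] at h
  exact funext fun k => by rw [hprop k, hc, one_mul]

end Support

theorem stmt_2_general (p ρ : ℤ → ℝ) (L : WithBot ℤ) (R : ℤ)
    (hsupp : ∀ k : ℤ, 0 < p k ↔ (L ≤ (k : WithBot ℤ) ∧ k ≤ R))
    (hnonneg : ∀ k, 0 ≤ p k)
    (hsum : ∑' k : ℤ, p k = 1)
    (hρnonneg : ∀ k, 0 ≤ ρ k)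
    (hρsum : ∑' k : ℤ, ρ k = 1)
    (hρsupp : ∀ k : ℤ, ρ k ≠ 0 → (L ≤ (k : WithBot ℤ) ∧ k ≤ R))
    (hint : Summable (fun k : ℤ => |(p k - p (k - 1)) / p k * (k : ℝ)| * ρ k)) :
    ρ = p ↔ ∀ k : ℤ, k ≤ R →
      ρ k = ∑' j : ℤ, ((p j - p (j - 1)) / p j * (if j ≤ k then (1 : ℝ) else 0)) * ρ j := by
  have hp : Summable p := by
    by_contra h
    simp [tsum_eq_zero_of_not_summable h] at hsum
  have hg := summable_mul_of_summable_abs_mul_intCast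
    (a := fun k => (p k - p (k - 1)) / p k) hρnonneg hint
  simp only [mul_ite, ite_mul, mul_one, mul_zero, zero_mul]
  constructor
  · rintro rfl k hk
    exact (tsum_ite_le_backward_score_mul_self hsupp hnonneg hp hk).symm
  · exact eq_of_forall_eq_tsum_ite_le_backward_score hsupp hnonneg hsum hρsum hρsupp hg

/-- Backward-difference Stein characterization (Corollary 3.3): for a pmf on `{L,...,R}` with
`R < ∞`, the pmf ρ of a random variable supported there equals p iff
`ρ k = E[(Δ⁻p(X)/p(X))·1{X ≤ k}]` for all `k ≤ R`. -/
theorem stmt_2 (p ρ : ℤ → ℝ) (L : WithBot ℤ) (R : ℤ)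
    (hsupp : ∀ k : ℤ, 0 < p k ↔ (L ≤ (k : WithBot ℤ) ∧ k ≤ R))
    (hnonneg : ∀ k, 0 ≤ p k)
    (hsum : ∑' k : ℤ, p k = 1)
    (hC2 : ∃ M : ℝ, ∀ k : ℤ, L ≤ ((k - 1 : ℤ) : WithBot ℤ) → k ≤ R →
      |(p k - p (k - 1)) * min (∑' ℓ : ℤ, if k ≤ ℓ then p ℓ else 0)
        (1 - ∑' ℓ : ℤ, if k ≤ ℓ then p ℓ else 0) / (p k * p (k - 1))| ≤ M)
    (hC3 : Summable (fun k : ℤ => |(k : ℝ)| * p k))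
    (hρnonneg : ∀ k, 0 ≤ ρ k)
    (hρsum : ∑' k : ℤ, ρ k = 1)
    (hρsupp : ∀ k : ℤ, ρ k ≠ 0 → (L ≤ (k : WithBot ℤ) ∧ k ≤ R))
    (hint : Summable (fun k : ℤ => |(p k - p (k - 1)) / p k * (k : ℝ)| * ρ k)) :
    ρ = p ↔ ∀ k : ℤ, k ≤ R →
      ρ k = ∑' j : ℤ, ((p j - p (j - 1)) / p j * (if j ≤ k then (1 : ℝ) else 0)) * ρ j :=
  stmt_2_general p ρ L R hsupp hnonneg hsum hρnonneg hρsum hρsupp hint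
end

section
/- Let p be a pmf on {L,...,R} with L > -∞ satisfying (C1)-(C3), and let X be a random variable on {L,...,R} with E|(Δ⁺p(X)/p(X))·X| < ∞. Then X has pmf p if and only if its CDF F satisfies F(k) = E[-(Δ⁺p(X)/p(X))·(min{X,k} - L + 1)] for all integers k ≥ L. -/
/-! With `a = -Δ⁺p / p`, the count `min j k - L + 1 = #{m ∈ [L, k] | m ≤ j}` rewrites the
right-hand side at `k` as `∑_{m=L}^{k} E[a(X); X ≥ m]`, while `F k = ∑_{m=L}^{k} ρ m`. So the
identities for all `k ≥ L` are equivalent to `ρ m = E[a(X); X ≥ m]` for all `m ≥ L`, and, by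
differencing and telescoping, to the first-order recurrence `ρ (m + 1) = ρ m * (1 - a m)`.
Because the support of `p` is an interval starting at `L`, `p` solves this recurrence, so every
solution is a multiple of `p` and normalization gives `ρ = p`. -/

open Finset

lemma Summable.of_mul_intCast {f : ℤ → ℝ} (h : Summable fun j => f j * j) : Summable f := by
  refine Summable.of_norm_bounded_eventually h.norm ?_
  filter_upwards [Set.Finite.compl_mem_cofinite (Set.finite_singleton (0 : ℤ))] with j hj
  have hj1 : (1 : ℝ) ≤ |(j : ℝ)| := by exact_mod_cast Int.one_le_abs hj
  rw [norm_mul, Real.norm_eq_abs (j : ℝ)]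
  exact le_mul_of_one_le_right (norm_nonneg _) hj1

lemma tsum_indicator_Ici_sub_tsum_indicator_Ici_succ {f : ℤ → ℝ} (hf : Summable f) (m : ℤ) :
    ∑' j, (Set.Ici m).indicator f j - ∑' j, (Set.Ici (m + 1)).indicator f j = f m := by
  rw [← (hf.indicator _).tsum_sub (hf.indicator _), ← tsum_ite_eq m f]
  refine tsum_congr fun j => ?_
  rcases lt_trichotomy j m with h | rfl | h
  · simp [h.ne, h.not_ge, show ¬m + 1 ≤ j by omega]
  · simp
  · simp [h.ne', h.le, show m + 1 ≤ j by omega]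

lemma tsum_indicator_Ici_sub_succ {p : ℤ → ℝ} (hp : Summable p) (m : ℤ) :
    ∑' j, (Set.Ici m).indicator (fun j => p j - p (j + 1)) j = p m := by
  have hshift : ∑' j, (Set.Ici m).indicator (fun j => p (j + 1)) j
      = ∑' j, (Set.Ici (m + 1)).indicator p j := by
    rw [← (Equiv.addRight (1 : ℤ)).tsum_eq ((Set.Ici (m + 1)).indicator p)]
    refine tsum_congr fun j => ?_
    simp [Set.indicator_apply]
  have hsucc : Summable fun j => p (j + 1) := (Equiv.addRight (1 : ℤ)).summable_iff.2 hp
  rw [Set.indicator_sub, (hp.indicator _).tsum_sub (hsucc.indicator _), hshift,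
    tsum_indicator_Ici_sub_tsum_indicator_Ici_succ hp]

lemma tsum_ite_le_eq_sum_Icc {ρ : ℤ → ℝ} {L : ℤ} (hρ : ∀ j < L, ρ j = 0) (k : ℤ) :
    ∑' j, (if j ≤ k then ρ j else 0) = ∑ m ∈ Icc L k, ρ m := by
  rw [tsum_eq_sum (s := Icc L k)]
  · exact sum_congr rfl fun j hj => if_pos (mem_Icc.1 hj).2
  · intro j hj
    rw [mem_Icc, not_and_or, not_le, not_le] at hj
    rcases hj with hj | hj
    · simp [hρ j hj]
    · exact if_neg (by omega)

lemma card_filter_le_Icc {L k j : ℤ} (hk : L ≤ k) (hj : L ≤ j) :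
    (((Icc L k).filter (· ≤ j)).card : ℤ) = min j k - L + 1 := by
  have : (Icc L k).filter (· ≤ j) = Icc L (min j k) := by
    ext m; simp only [mem_filter, mem_Icc, le_min_iff]; omega
  rw [this, Int.card_Icc, Int.toNat_of_nonneg (by omega)]
  ring

lemma tsum_mul_eq_sum_Icc_tsum_indicator_Ici {f : ℤ → ℝ} (hf : Summable f) {L k : ℤ}
    (hk : L ≤ k) (hfL : ∀ j < L, f j = 0) :
    ∑' j, f j * ((min j k - L + 1 : ℤ) : ℝ) =
      ∑ m ∈ Icc L k, ∑' j, (Set.Ici m).indicator f j := by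
  rw [← Summable.tsum_finsetSum fun m _ => hf.indicator _]
  congr 1 with j
  by_cases hj : L ≤ j
  · simp only [Set.indicator_apply, Set.mem_Ici]
    rw [← sum_filter, sum_const, nsmul_eq_mul, mul_comm]
    exact_mod_cast congrArg (fun n : ℤ => (n : ℝ) * f j) (card_filter_le_Icc hk hj).symm
  · rw [hfL j (not_le.1 hj), zero_mul]
    exact (sum_eq_zero fun m hm => Set.indicator_of_notMem
      (s := Set.Ici m) (fun h => hj ((mem_Icc.1 hm).1.trans h)) f).symm

lemma forall_eq_iff_forall_sum_Icc_eq {M : Type*} [AddCommGroup M] {u v : ℤ → M} {L : ℤ} :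
    (∀ k, L ≤ k → ∑ m ∈ Icc L k, u m = ∑ m ∈ Icc L k, v m) ↔
      ∀ m, L ≤ m → u m = v m := by
  refine ⟨fun h m hm => ?_, fun h k _ => sum_congr rfl fun m hm => h m (mem_Icc.1 hm).1⟩
  have hsplit (w : ℤ → M) : ∑ i ∈ Icc L m, w i = w m + ∑ i ∈ Icc L (m - 1), w i := by
    rw [← insert_Icc_sub_one_right_eq_Icc hm, sum_insert (by simp)]
  have hm' := h m hm
  rw [hsplit u, hsplit v] at hm'
  rcases hm.eq_or_lt with rfl | hlt
  · simpa using hm'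
  · simpa [h (m - 1) (by omega)] using hm'

lemma mul_eq_mul_of_succ_eq_mul {u v r : ℤ → ℝ} {L : ℤ}
    (hu : ∀ k, L ≤ k → u (k + 1) = u k * r k)
    (hv : ∀ k, L ≤ k → v (k + 1) = v k * r k) : ∀ k, L ≤ k → u k * v L = v k * u L := by
  refine Int.leInduction (by ring) fun k hk ih => ?_
  rw [hu k hk, hv k hk]
  linear_combination r k * ih

lemma eq_of_mul_eq_mul_of_tsum_eq_one_s3 {α : Type*} {u v : α → ℝ} {c d : ℝ}
    (h : ∀ k, u k * c = v k * d) (hc : c ≠ 0) (hu : ∑' k, u k = 1) (hv : ∑' k, v k = 1) :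
    u = v := by
  have hu' : u = fun k => d / c * v k := funext fun k => by field_simp; linear_combination h k
  have hdc : d / c = 1 := by rwa [hu', tsum_mul_left, hv, mul_one] at hu
  simpa [hdc] using hu'

lemma mul_one_add_sub_div_of_imp {p : ℤ → ℝ} {k : ℤ} (h : p k = 0 → p (k + 1) = 0) :
    p k * (1 + (p (k + 1) - p k) / p k) = p (k + 1) := by
  rw [mul_one_add, mul_div_cancel_of_imp' fun h0 => by simp [h0, h h0]]
  ring

namespace IntervalSupport

variable {p : ℤ → ℝ} {L : ℤ} {R : WithTop ℤ}

lemma eq_zero_of_lt (hsupp : ∀ k : ℤ, 0 < p k ↔ (L ≤ k ∧ (k : WithTop ℤ) ≤ R))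
    (hnonneg : ∀ k, 0 ≤ p k) {k : ℤ} (hk : k < L) : p k = 0 :=
  (hnonneg k).antisymm' <| not_lt.1 fun h => hk.not_ge ((hsupp k).1 h).1

lemma succ_eq_zero (hsupp : ∀ k : ℤ, 0 < p k ↔ (L ≤ k ∧ (k : WithTop ℤ) ≤ R))
    (hnonneg : ∀ k, 0 ≤ p k) {k : ℤ} (hk : L ≤ k) (h0 : p k = 0) : p (k + 1) = 0 := by
  refine (hnonneg _).antisymm' <| not_lt.1 fun h => h0.not_gt <| (hsupp k).2 ⟨hk, ?_⟩
  exact (WithTop.coe_le_coe.2 (Int.le_add_one le_rfl)).trans ((hsupp _).1 h).2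

lemma pos_left (hsupp : ∀ k : ℤ, 0 < p k ↔ (L ≤ k ∧ (k : WithTop ℤ) ≤ R))
    (hsum : ∑' k, p k = 1) : 0 < p L := by
  obtain ⟨k, hk⟩ : ∃ k, 0 < p k := by
    by_contra! h
    linarith [(tsum_nonpos h : ∑' k, p k ≤ 0)]
  obtain ⟨hLk, hkR⟩ := (hsupp k).1 hk
  exact (hsupp L).2 ⟨le_rfl, (WithTop.coe_le_coe.2 hLk).trans hkR⟩

end IntervalSupport

lemma forall_tsum_ite_le_eq_iff_forall_eq_tsum_indicator_Ici {ρ a : ℤ → ℝ} {L : ℤ}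
    (hρL : ∀ j < L, ρ j = 0) (haρ : Summable fun j => a j * ρ j) :
    (∀ k, L ≤ k → (∑' j, if j ≤ k then ρ j else 0)
      = ∑' j, (a j * ((min j k - L + 1 : ℤ) : ℝ)) * ρ j) ↔
      ∀ m, L ≤ m → ρ m = ∑' j, (Set.Ici m).indicator (fun j => a j * ρ j) j := by
  rw [← forall_eq_iff_forall_sum_Icc_eq (u := ρ)]
  refine forall₂_congr fun k hk => ?_
  rw [tsum_ite_le_eq_sum_Icc hρL, ← tsum_mul_eq_sum_Icc_tsum_indicator_Ici haρ hk
    fun j hj => by simp [hρL j hj]]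
  simp only [mul_right_comm]

lemma forall_eq_tsum_indicator_Ici_iff_forall_succ_eq_mul {ρ a : ℤ → ℝ} {L : ℤ}
    (hρ : Summable ρ) (haρ : Summable fun j => a j * ρ j) :
    (∀ m, L ≤ m → ρ m = ∑' j, (Set.Ici m).indicator (fun j => a j * ρ j) j) ↔
      ∀ k, L ≤ k → ρ (k + 1) = ρ k * (1 - a k) := by
  constructor
  · intro hT k hk
    have h := tsum_indicator_Ici_sub_tsum_indicator_Ici_succ haρ k
    rw [← hT k hk, ← hT (k + 1) (by omega)] at h
    linear_combination -h
  · intro hrec m hm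
    rw [Set.indicator_congr (s := Set.Ici m) (g := fun j => ρ j - ρ (j + 1)) fun j hj => by
      linear_combination hrec j (hm.trans hj), tsum_indicator_Ici_sub_succ hρ]

theorem stmt_3_general (p ρ : ℤ → ℝ) (L : ℤ) (R : WithTop ℤ)
    (hsupp : ∀ k : ℤ, 0 < p k ↔ (L ≤ k ∧ (k : WithTop ℤ) ≤ R))
    (hnonneg : ∀ k, 0 ≤ p k)
    (hsum : ∑' k : ℤ, p k = 1)
    (hρsum : ∑' k : ℤ, ρ k = 1)
    (hρsupp : ∀ k : ℤ, ρ k ≠ 0 → (L ≤ k ∧ (k : WithTop ℤ) ≤ R))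
    (hint : Summable (fun k : ℤ => |(p (k + 1) - p k) / p k * (k : ℝ)| * ρ k)) :
    ρ = p ↔ ∀ k : ℤ, L ≤ k →
      (∑' j : ℤ, if j ≤ k then ρ j else 0)
        = ∑' j : ℤ, (-((p (j + 1) - p j) / p j) * ((min j k - L + 1 : ℤ) : ℝ)) * ρ j := by
  have hρL : ∀ j < L, ρ j = 0 := fun j hj => by_contra fun h => hj.not_ge (hρsupp j h).1
  have hsummable {f : ℤ → ℝ} (h : ∑' k, f k = 1) : Summable f := by
    by_contra hf
    simp [tsum_eq_zero_of_not_summable hf] at h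
  have haρ : Summable fun j => -((p (j + 1) - p j) / p j) * ρ j := by
    refine Summable.of_mul_intCast (summable_abs_iff.1 (hint.abs.congr fun j => ?_))
    simp only [abs_mul, abs_neg, abs_abs]
    ring
  rw [forall_tsum_ite_le_eq_iff_forall_eq_tsum_indicator_Ici hρL haρ,
    forall_eq_tsum_indicator_Ici_iff_forall_succ_eq_mul (hsummable hρsum) haρ]
  simp only [sub_neg_eq_add]
  constructor
  · rintro rfl k hk
    exact (mul_one_add_sub_div_of_imp (IntervalSupport.succ_eq_zero hsupp hnonneg hk)).symm
  · intro hrec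
    refine eq_of_mul_eq_mul_of_tsum_eq_one_s3 (d := ρ L) (fun k => ?_)
      (IntervalSupport.pos_left hsupp hsum).ne' hρsum hsum
    rcases le_or_gt L k with hk | hk
    · exact mul_eq_mul_of_succ_eq_mul hrec (fun k hk =>
        (mul_one_add_sub_div_of_imp (IntervalSupport.succ_eq_zero hsupp hnonneg hk)).symm) k hk
    · simp [hρL k hk, IntervalSupport.eq_zero_of_lt hsupp hnonneg hk]

/-- Distribution-function characterization (Proposition 4.1): X has pmf p iff its CDF F
satisfies `F k = E[-(Δ⁺p(X)/p(X))·(min{X,k} - L + 1)]` for all `k ≥ L`. -/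
theorem stmt_3 (p ρ : ℤ → ℝ) (L : ℤ) (R : WithTop ℤ)
    (hsupp : ∀ k : ℤ, 0 < p k ↔ (L ≤ k ∧ (k : WithTop ℤ) ≤ R))
    (hnonneg : ∀ k, 0 ≤ p k)
    (hsum : ∑' k : ℤ, p k = 1)
    (hC2 : ∃ M : ℝ, ∀ k : ℤ, L ≤ k → ((k + 1 : ℤ) : WithTop ℤ) ≤ R →
      |(p (k + 1) - p k) * min (∑' ℓ : ℤ, if ℓ ≤ k then p ℓ else 0)
        (1 - ∑' ℓ : ℤ, if ℓ ≤ k then p ℓ else 0) / (p k * p (k + 1))| ≤ M)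
    (hC3 : Summable (fun k : ℤ => |(k : ℝ)| * p k))
    (hρnonneg : ∀ k, 0 ≤ ρ k)
    (hρsum : ∑' k : ℤ, ρ k = 1)
    (hρsupp : ∀ k : ℤ, ρ k ≠ 0 → (L ≤ k ∧ (k : WithTop ℤ) ≤ R))
    (hint : Summable (fun k : ℤ => |(p (k + 1) - p k) / p k * (k : ℝ)| * ρ k)) :
    ρ = p ↔ ∀ k : ℤ, L ≤ k →
      (∑' j : ℤ, if j ≤ k then ρ j else 0)
        = ∑' j : ℤ, (-((p (j + 1) - p j) / p j) * ((min j k - L + 1 : ℤ) : ℝ)) * ρ j :=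
  stmt_3_general p ρ L R hsupp hnonneg hsum hρsum hρsupp hint
end

section
/- Let p be a pmf on ℕ₀ satisfying (C1)-(C3) with support ℕ₀, and let X : Ω → ℕ₀ be a random variable with E|(Δ⁺p(X)/p(X))·X| < ∞. Then X has pmf p if and only if its probability generating function satisfies G_X(s) = E[-(Δ⁺p(X)/p(X))·(1 - s^{X+1})/(1 - s)] for all s ∈ [0,1). -/
/-!
Put `c k = -(Δ⁺p(k) / p(k)) ρ(k)` and let `T j = ∑_{i ≥ j} c i` be its tails. Since
`(1 - s^(k+1)) / (1 - s) = ∑_{j ≤ k} s^j`, summation by parts turns the right-hand side into the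
power series `∑ s^j T j`. Two power series with bounded coefficients that agree on `[0, 1)` have the
same coefficients, so the identity holds iff `ρ = T`. For `ρ = p` the tails telescope to `p j`.
Conversely `ρ = T` gives `ρ (j+1) = ρ j - c j = ρ j p (j+1) / p j`, so `ρ` is a multiple of `p`,
and having total mass one it equals `p`.
-/

open Filter Topology FormalMultilinearSeries

theorem Summable.pow_succ_mul {c : ℕ → ℝ} (hc : Summable c) {s : ℝ} (hs : |s| ≤ 1) :
    Summable fun j => s ^ (j + 1) * c j := by
  refine .of_norm_bounded hc.norm fun j => ?_
  rw [norm_mul, norm_pow, Real.norm_eq_abs]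
  exact mul_le_of_le_one_left (norm_nonneg _) (pow_le_one₀ (abs_nonneg s) hs)

theorem Summable.of_mul_natCast {f : ℕ → ℝ} (hf : Summable fun k => f k * k) : Summable f := by
  refine (summable_nat_add_iff 1).1 <| .of_norm_bounded ((summable_nat_add_iff 1).2 hf).norm
    fun k => ?_
  rw [norm_mul, Nat.cast_add_one, Real.norm_of_nonneg (by positivity : (0 : ℝ) ≤ k + 1)]
  exact le_mul_of_one_le_right (norm_nonneg _) (by simp)

theorem tsum_nat_add_succ {c : ℕ → ℝ} (hc : Summable c) (j : ℕ) :
    ∑' i, c (i + (j + 1)) = ∑' i, c (i + j) - c j := by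
  rw [eq_sub_iff_add_eq', ((summable_nat_add_iff j).2 hc).tsum_eq_zero_add]
  simp only [zero_add, add_right_comm _ 1 j, add_assoc]

theorem tsum_sub_succ_nat_add {p : ℕ → ℝ} (hp : Summable p) (j : ℕ) :
    ∑' i, (p (i + j) - p (i + j + 1)) = p j := by
  have hsplit := ((summable_nat_add_iff j).2 hp).tsum_sub ((summable_nat_add_iff (j + 1)).2 hp)
  rw [tsum_nat_add_succ hp, sub_sub_cancel] at hsplit
  simpa only [← add_assoc] using hsplit

theorem one_sub_mul_tsum_pow_mul_eq {c T : ℕ → ℝ} (hc : Summable c)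
    (hT : BddAbove (Set.range fun j => ‖T j‖)) (hcT : ∀ j, T (j + 1) = T j - c j) {s : ℝ}
    (hs : |s| < 1) :
    (1 - s) * ∑' j, s ^ j * T j = T 0 - ∑' j, s ^ (j + 1) * c j := by
  obtain ⟨B, hB⟩ := hT
  have hsT : Summable fun j => s ^ j * T j := by
    refine .of_norm_bounded ((summable_geometric_of_lt_one (abs_nonneg s) hs).mul_right B)
      fun j => ?_
    rw [norm_mul, norm_pow, Real.norm_eq_abs, Real.norm_eq_abs]
    gcongr
    exact hB ⟨j, rfl⟩
  have hshift : ∑' j, s ^ j * T j = T 0 + (s * ∑' j, s ^ j * T j - ∑' j, s ^ (j + 1) * c j) := by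
    nth_rewrite 1 [hsT.tsum_eq_zero_add]
    rw [← tsum_mul_left, ← (hsT.mul_left s).tsum_sub (hc.pow_succ_mul hs.le), pow_zero, one_mul]
    exact congrArg _ (tsum_congr fun j => by rw [hcT]; ring)
  linarith

theorem tsum_mul_geom_eq_tsum_pow_mul_tsum_nat_add {c : ℕ → ℝ} (hc : Summable c) {s : ℝ}
    (hs : |s| < 1) :
    ∑' k, c k * ((1 - s ^ (k + 1)) / (1 - s)) = ∑' j, s ^ j * ∑' i, c (i + j) := by
  have hs1 : 1 - s ≠ 0 := sub_ne_zero.mpr fun h => by simp [← h] at hs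
  have key := one_sub_mul_tsum_pow_mul_eq hc (tendsto_sum_nat_add c).norm.bddAbove_range
    (tsum_nat_add_succ hc) hs
  simp only [add_zero] at key
  calc ∑' k, c k * ((1 - s ^ (k + 1)) / (1 - s))
      = (∑' k, c k - ∑' k, s ^ (k + 1) * c k) / (1 - s) := by
        rw [← hc.tsum_sub (hc.pow_succ_mul hs.le), ← tsum_div_const]
        exact tsum_congr fun k => by ring
    _ = _ := by rw [← key, mul_div_cancel_left₀ _ hs1]

theorem hasFPowerSeriesAt_tsum_pow_mul {𝕜 : Type*} [NontriviallyNormedField 𝕜]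
    [CompleteSpace 𝕜] {a : ℕ → 𝕜} (ha : BddAbove (Set.range fun j => ‖a j‖)) :
    HasFPowerSeriesAt (fun s => ∑' j, s ^ j * a j) (.ofScalars 𝕜 a) 0 := by
  obtain ⟨A, hA⟩ := ha
  have hradius : 0 < (ofScalars 𝕜 a).radius :=
    zero_lt_one.trans_le <| by
      simpa using (ofScalars 𝕜 a).le_radius_of_bound A (r := 1) fun n => by
        simpa [ofScalars_norm] using hA ⟨n, rfl⟩
  convert ((ofScalars 𝕜 a).hasFPowerSeriesOnBall hradius).hasFPowerSeriesAt using 2 with s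
  exact (tsum_congr fun j => mul_comm _ _).trans (ofScalars_sum_eq a s).symm

theorem eq_of_eventually_tsum_pow_mul_eq {a b : ℕ → ℝ}
    (ha : BddAbove (Set.range fun j => ‖a j‖)) (hb : BddAbove (Set.range fun j => ‖b j‖))
    (h : ∀ᶠ s in 𝓝[>] 0, ∑' j, s ^ j * a j = ∑' j, s ^ j * b j) : a = b := by
  have hab := (hasFPowerSeriesAt_tsum_pow_mul ha).sub (hasFPowerSeriesAt_tsum_pow_mul hb)
  rw [← ofScalars_sub] at hab
  by_contra hne
  have hne' : ofScalars ℝ (a - b) ≠ 0 := by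
    rwa [Ne, ofScalars_series_eq_zero, sub_eq_zero]
  obtain ⟨s, hs_eq, hs_ne⟩ :=
    (h.and ((hab.locally_ne_zero hne').filter_mono (nhdsGT_le_nhdsNE 0))).exists
  exact hs_ne (sub_eq_zero.mpr hs_eq)

theorem tsum_pow_mul_eq_on_Ico_iff {a b : ℕ → ℝ}
    (ha : BddAbove (Set.range fun j => ‖a j‖)) (hb : BddAbove (Set.range fun j => ‖b j‖)) :
    (∀ s : ℝ, 0 ≤ s → s < 1 → ∑' j, s ^ j * a j = ∑' j, s ^ j * b j) ↔ a = b := by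
  refine ⟨fun h => eq_of_eventually_tsum_pow_mul_eq ha hb ?_, fun h _ _ _ => by rw [h]⟩
  filter_upwards [Ioo_mem_nhdsGT zero_lt_one] with s hs using h s hs.1.le hs.2

theorem eq_of_mul_succ_eq_of_tsum_eq {p ρ : ℕ → ℝ} (hp : ∀ k, p k ≠ 0)
    (h : ∀ j, ρ (j + 1) * p j = ρ j * p (j + 1)) (hsum : ∑' k, ρ k = ∑' k, p k)
    (hsum_ne : ∑' k, p k ≠ 0) : ρ = p := by
  have hprop : ∀ j, ρ j = ρ 0 / p 0 * p j := by
    intro j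
    induction j with
    | zero => rw [div_mul_cancel₀ _ (hp 0)]
    | succ j ih =>
      apply mul_right_cancel₀ (hp j)
      rw [h j, ih]
      ring
  have hconst : ρ 0 / p 0 = 1 := by
    rw [tsum_congr hprop, tsum_mul_left] at hsum
    exact (mul_eq_right₀ hsum_ne).mp hsum
  funext j
  rw [hprop j, hconst, one_mul]

theorem stmt_4_general (p ρ : ℕ → ℝ) 
    (hsupp : ∀ k : ℕ, 0 < p k)
    (hsum : ∑' k : ℕ, p k = 1)
    (hρnonneg : ∀ k, 0 ≤ ρ k)
    (hρsum : ∑' k : ℕ, ρ k = 1)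
    (hint : Summable (fun k : ℕ => |(p (k + 1) - p k) / p k * (k : ℝ)| * ρ k)) :
    ρ = p ↔ ∀ s : ℝ, 0 ≤ s → s < 1 →
      (∑' k : ℕ, s ^ k * ρ k)
        = ∑' k : ℕ, (-((p (k + 1) - p k) / p k) * ((1 - s ^ (k + 1)) / (1 - s))) * ρ k := by
  have hρ : Summable ρ := by
    by_contra h
    simp [tsum_eq_zero_of_not_summable h] at hρsum
  set c : ℕ → ℝ := fun k => -((p (k + 1) - p k) / p k) * ρ k with hc_def
  have hc : Summable c := by
    refine .of_mul_natCast (summable_abs_iff.mp (hint.congr fun k => ?_))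
    rw [hc_def, abs_mul, abs_mul, abs_mul, abs_neg, abs_of_nonneg (hρnonneg k)]
    ring
  have hRHS : ∀ s : ℝ, 0 ≤ s → s < 1 →
      ∑' k, (-((p (k + 1) - p k) / p k) * ((1 - s ^ (k + 1)) / (1 - s))) * ρ k
        = ∑' j, s ^ j * ∑' i, c (i + j) := fun s hs0 hs1 => by
    rw [← tsum_mul_geom_eq_tsum_pow_mul_tsum_nat_add hc (abs_lt.mpr ⟨by linarith, hs1⟩)]
    exact tsum_congr fun k => by ring
  rw [forall_congr' fun s => forall₂_congr fun hs0 hs1 => by rw [hRHS s hs0 hs1],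
    tsum_pow_mul_eq_on_Ico_iff hρ.tendsto_atTop_zero.norm.bddAbove_range
      (tendsto_sum_nat_add c).norm.bddAbove_range]
  constructor
  · rintro rfl
    funext j
    rw [← tsum_sub_succ_nat_add hρ j]
    exact tsum_congr fun i => by
      simp only [hc_def, neg_mul, div_mul_cancel₀ _ (hsupp _).ne', neg_sub]
  · intro h
    refine eq_of_mul_succ_eq_of_tsum_eq (fun k => (hsupp k).ne') (fun j => ?_)
      (by rw [hρsum, hsum]) (by simp [hsum])
    have hrec : ρ (j + 1) = ρ j - c j := by
      rw [h]
      exact tsum_nat_add_succ hc j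
    rw [hrec, hc_def]
    field_simp [(hsupp j).ne']
    ring

/-- Probability generating function characterization (Proposition 4.3) for pmfs on ℕ₀:
X has pmf p iff `G_X(s) = E[-(Δ⁺p(X)/p(X))·(1 - s^{X+1})/(1-s)]` for all `s ∈ [0,1)`. -/
theorem stmt_4 (p ρ : ℕ → ℝ) 
    (hsupp : ∀ k : ℕ, 0 < p k)
    (hsum : ∑' k : ℕ, p k = 1)
    (hC2 : ∃ M : ℝ, ∀ k : ℕ,
      |(p (k + 1) - p k) * min (∑ ℓ ∈ Finset.range (k + 1), p ℓ)
        (1 - ∑ ℓ ∈ Finset.range (k + 1), p ℓ) / (p k * p (k + 1))| ≤ M)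
    (hC3 : Summable (fun k : ℕ => (k : ℝ) * p k))
    (hρnonneg : ∀ k, 0 ≤ ρ k)
    (hρsum : ∑' k : ℕ, ρ k = 1)
    (hint : Summable (fun k : ℕ => |(p (k + 1) - p k) / p k * (k : ℝ)| * ρ k)) :
    ρ = p ↔ ∀ s : ℝ, 0 ≤ s → s < 1 →
      (∑' k : ℕ, s ^ k * ρ k)
        = ∑' k : ℕ, (-((p (k + 1) - p k) / p k) * ((1 - s ^ (k + 1)) / (1 - s))) * ρ k :=
  stmt_4_general p ρ hsupp hsum hρnonneg hρsum hint
end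

section
/- For the Poisson pmf p with parameter λ > 0, the quantity |Δ⁺p(k)·(1 - P(k))/(p(k)·p(k+1))| is bounded in k; in particular, for every k with λ/(k+2) < 1, it is at most |λ/(k+1) - 1| · 1/(1 - λ/(k+2)). -/
/-!
Writing `p(ℓ + k + 1) = p(k + 1) λ^ℓ (k + 1)! / (ℓ + k + 1)!`, the tail `1 - P(k)` is
`p(k + 1)` times a series whose terms are dominated both by `λ^ℓ / ℓ!` (giving the uniform
bound `e^λ`) and by `(λ / (k + 2))^ℓ` (giving the geometric bound). The remaining factor is
`Δ⁺p(k) / p(k) = λ / (k + 1) - 1`.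
-/

open Real Nat Finset

noncomputable def poissonWeight (lam : ℝ) (k : ℕ) : ℝ := exp (-lam) * lam ^ k / k !

section PoissonWeight

variable {lam : ℝ}

theorem poissonWeight_pos (hlam : 0 < lam) (k : ℕ) : 0 < poissonWeight lam k := by
  unfold poissonWeight; positivity

theorem poissonWeight_nonneg (hlam : 0 ≤ lam) (k : ℕ) : 0 ≤ poissonWeight lam k := by
  unfold poissonWeight; positivity

theorem poissonWeight_succ (lam : ℝ) (k : ℕ) :
    poissonWeight lam (k + 1) = poissonWeight lam k * (lam / (k + 1)) := by
  simp only [poissonWeight, factorial_succ, cast_mul, cast_succ, pow_succ]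
  field_simp

theorem hasSum_poissonWeight (lam : ℝ) : HasSum (poissonWeight lam) 1 := by
  have h := (NormedSpace.expSeries_div_hasSum_exp lam).mul_left (exp (-lam))
  rw [← exp_eq_exp_ℝ, ← exp_add, neg_add_cancel, exp_zero] at h
  exact (funext fun k ↦ (mul_div_assoc _ _ _).symm : _ = poissonWeight lam) ▸ h

theorem hasSum_poissonWeight_add (lam : ℝ) (n : ℕ) :
    HasSum (fun ℓ ↦ poissonWeight lam (ℓ + n)) (1 - ∑ ℓ ∈ range n, poissonWeight lam ℓ) :=
  (hasSum_nat_add_iff' n).mpr (hasSum_poissonWeight lam)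

theorem poissonWeight_add_le (hlam : 0 ≤ lam) {k ℓ : ℕ} {c : ℝ} (hc : 0 < c)
    (hfac : (k ! : ℝ) * c ≤ (ℓ + k)!) :
    poissonWeight lam (ℓ + k) ≤ poissonWeight lam k * (lam ^ ℓ / c) := by
  have hk : (0 : ℝ) < k ! := by positivity
  calc poissonWeight lam (ℓ + k) = exp (-lam) * lam ^ k * lam ^ ℓ / (ℓ + k)! := by
        rw [poissonWeight, pow_add, mul_comm (lam ^ ℓ), mul_assoc]
    _ ≤ exp (-lam) * lam ^ k * lam ^ ℓ / (k ! * c) :=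
        div_le_div_of_nonneg_left (by positivity) (by positivity) hfac
    _ = poissonWeight lam k * (lam ^ ℓ / c) := by
        rw [poissonWeight]; ring

theorem one_sub_sum_range_poissonWeight_le (hlam : 0 ≤ lam) (k : ℕ) {c : ℕ → ℝ}
    (hc : ∀ ℓ, 0 < c ℓ) (hfac : ∀ ℓ, ((k + 1)! : ℝ) * c ℓ ≤ (ℓ + (k + 1))!) {A : ℝ}
    (hA : HasSum (fun ℓ ↦ lam ^ ℓ / c ℓ) A) :
    1 - ∑ ℓ ∈ range (k + 1), poissonWeight lam ℓ ≤ poissonWeight lam (k + 1) * A :=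
  hasSum_le (fun ℓ ↦ poissonWeight_add_le hlam (hc ℓ) (hfac ℓ))
    (hasSum_poissonWeight_add lam (k + 1)) (hA.mul_left _)

theorem one_sub_sum_range_poissonWeight_le_exp (hlam : 0 ≤ lam) (k : ℕ) :
    1 - ∑ ℓ ∈ range (k + 1), poissonWeight lam ℓ ≤ poissonWeight lam (k + 1) * exp lam := by
  refine one_sub_sum_range_poissonWeight_le hlam k (c := fun ℓ ↦ (ℓ ! : ℝ))
    (fun ℓ ↦ by positivity) (fun ℓ ↦ ?_)
    (by simpa only [exp_eq_exp_ℝ] using NormedSpace.expSeries_div_hasSum_exp lam)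
  rw [add_comm ℓ]
  exact_mod_cast le_of_dvd (factorial_pos _) (factorial_mul_factorial_dvd_factorial_add _ _)

theorem one_sub_sum_range_poissonWeight_le_geometric (hlam : 0 ≤ lam) {k : ℕ}
    (hk : lam / (k + 2) < 1) :
    1 - ∑ ℓ ∈ range (k + 1), poissonWeight lam ℓ
      ≤ poissonWeight lam (k + 1) * (1 - lam / (k + 2))⁻¹ := by
  refine one_sub_sum_range_poissonWeight_le hlam k (c := fun ℓ ↦ ((k : ℝ) + 2) ^ ℓ)
    (fun ℓ ↦ by positivity) (fun ℓ ↦ ?_) ?_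
  · rw [add_comm ℓ]
    exact_mod_cast factorial_mul_pow_le_factorial
  · simpa only [div_pow] using hasSum_geometric_of_lt_one (by positivity) hk

theorem abs_forwardDiff_mul_tail_div_le (hlam : 0 < lam) (k : ℕ) {B : ℝ}
    (hB : 1 - ∑ ℓ ∈ range (k + 1), poissonWeight lam ℓ ≤ poissonWeight lam (k + 1) * B) :
    |(poissonWeight lam (k + 1) - poissonWeight lam k) *
        (1 - ∑ ℓ ∈ range (k + 1), poissonWeight lam ℓ) /
        (poissonWeight lam k * poissonWeight lam (k + 1))|
      ≤ |lam / (k + 1) - 1| * B := by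
  set T := 1 - ∑ ℓ ∈ range (k + 1), poissonWeight lam ℓ
  have hp := poissonWeight_pos hlam k
  have hp' := poissonWeight_pos hlam (k + 1)
  have hT : 0 ≤ T := (hasSum_poissonWeight_add lam (k + 1)).nonneg
    fun ℓ ↦ poissonWeight_nonneg hlam.le _
  have hdiff : poissonWeight lam (k + 1) - poissonWeight lam k
      = poissonWeight lam k * (lam / (k + 1) - 1) := by
    rw [poissonWeight_succ]; ring
  calc _ = |lam / (k + 1) - 1| * (T / poissonWeight lam (k + 1)) := by
        rw [hdiff, abs_div, abs_mul, abs_mul, abs_of_pos hp, abs_of_pos (mul_pos hp hp'),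
          abs_of_nonneg hT]
        field_simp
    _ ≤ |lam / (k + 1) - 1| * B := by
        gcongr
        rwa [div_le_iff₀' hp']

end PoissonWeight

/-- Condition (C2) for the Poisson distribution: `|Δ⁺p(k)(1-P(k))/(p(k)p(k+1))|` is bounded,
and for `λ/(k+2) < 1` it is at most `|λ/(k+1)-1| / (1 - λ/(k+2))`. -/
theorem stmt_6 (lam : ℝ) (hlam : 0 < lam) (p : ℕ → ℝ) (P : ℕ → ℝ)
    (hp : ∀ k : ℕ, p k = Real.exp (-lam) * lam ^ k / (Nat.factorial k : ℝ))
    (hP : ∀ k : ℕ, P k = ∑ ℓ ∈ Finset.range (k + 1), p ℓ) :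
    (∃ M : ℝ, ∀ k : ℕ, |(p (k + 1) - p k) * (1 - P k) / (p k * p (k + 1))| ≤ M) ∧
    (∀ k : ℕ, lam / (k + 2) < 1 →
      |(p (k + 1) - p k) * (1 - P k) / (p k * p (k + 1))|
        ≤ |lam / (k + 1) - 1| * (1 / (1 - lam / (k + 2)))) := by
  obtain rfl : p = poissonWeight lam := funext hp
  obtain rfl : P = fun k ↦ ∑ ℓ ∈ range (k + 1), poissonWeight lam ℓ := funext hP
  refine ⟨⟨(lam + 1) * exp lam, fun k ↦ ?_⟩, fun k hk ↦ ?_⟩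
  · refine (abs_forwardDiff_mul_tail_div_le hlam k
      (one_sub_sum_range_poissonWeight_le_exp hlam.le k)).trans ?_
    have hquot : lam / (k + 1) ≤ lam := div_le_self hlam.le (by linarith [k.cast_nonneg (α := ℝ)])
    have hquot_nonneg : 0 ≤ lam / (k + 1) := by positivity
    gcongr
    exact abs_le.mpr ⟨by linarith, by linarith⟩
  · rw [one_div]
    exact abs_forwardDiff_mul_tail_div_le hlam k
      (one_sub_sum_range_poissonWeight_le_geometric hlam.le hk)
end

section
/- A random variable X : Ω → ℕ₀ with E[X] < ∞ follows the Poisson distribution with parameter λ > 0 if and only if its pmf ρ satisfies ρ(k) = E[(1 - λ/(X+1))·1{X ≥ k}] for all k ∈ ℕ₀. -/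
/-- Stein characterization of the Poisson distribution: an ℕ₀-valued random variable with
finite mean is Poisson(λ) iff `ρ k = E[(1 - λ/(X+1))·1{X ≥ k}]` for all k. -/
theorem stmt_7 (lam : ℝ) (hlam : 0 < lam) (ρ : ℕ → ℝ)
    (hρnonneg : ∀ k, 0 ≤ ρ k)
    (hρsum : ∑' k : ℕ, ρ k = 1)
    (hmean : Summable (fun k : ℕ => (k : ℝ) * ρ k)) :
    (∀ k : ℕ, ρ k = Real.exp (-lam) * lam ^ k / (Nat.factorial k : ℝ)) ↔
    (∀ k : ℕ, ρ k = ∑' j : ℕ, (1 - lam / (j + 1)) * (if k ≤ j then (1 : ℝ) else 0) * ρ j) := by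
  -- ρ is summable
  have hsum : Summable ρ := by
    by_contra hns
    rw [tsum_eq_zero_of_not_summable hns] at hρsum
    norm_num at hρsum
  set f : ℕ → ℕ → ℝ := fun k j => (1 - lam / (j + 1)) * (if k ≤ j then (1 : ℝ) else 0) * ρ j
    with hf
  have hfsummable : ∀ k, Summable (f k) := by
    intro k
    apply Summable.of_norm_bounded (g := fun j => (1 + lam) * ρ j) (hsum.mul_left _)
    intro j
    have hj1 : (0:ℝ) < (j : ℝ) + 1 := by positivity
    have hle : lam / ((j:ℝ) + 1) ≤ lam := by
      rw [div_le_iff₀ hj1]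
      nlinarith [Nat.cast_nonneg (α := ℝ) j]
    have h0 : (0:ℝ) ≤ lam / ((j:ℝ) + 1) := by positivity
    have habs : |1 - lam / ((j:ℝ) + 1)| ≤ 1 + lam := by
      rw [abs_sub_le_iff]
      constructor <;> nlinarith
    simp only [hf]
    rw [Real.norm_eq_abs, abs_mul, abs_mul, abs_of_nonneg (hρnonneg j)]
    split_ifs with h
    · simp only [abs_one, mul_one]
      exact mul_le_mul_of_nonneg_right habs (hρnonneg j)
    · simp [mul_nonneg, hρnonneg j, mul_nonneg (by positivity : (0:ℝ) ≤ 1 + lam) (hρnonneg j)]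
  constructor
  · -- forward: Poisson ⇒ identity
    intro hp k
    have hstep : ∀ j : ℕ, f k j = (if k ≤ j then ρ j - ρ (j + 1) else 0) := by
      intro j
      have hfac : (Nat.factorial (j + 1) : ℝ) = ((j:ℝ) + 1) * (Nat.factorial j : ℝ) := by
        push_cast [Nat.factorial_succ]; ring
      have h1 : ρ (j + 1) = lam / ((j:ℝ) + 1) * ρ j := by
        rw [hp j, hp (j + 1), hfac]
        have hj1 : ((j:ℝ) + 1) ≠ 0 := by positivity
        have hfj : (Nat.factorial j : ℝ) ≠ 0 := by positivity
        field_simp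
        ring
      simp only [hf]
      split_ifs with h
      · rw [h1]; ring
      · ring
    -- telescoping: partial sums
    have htel : ∀ n : ℕ, k ≤ n → ∑ j ∈ Finset.range n, f k j = ρ k - ρ n := by
      intro n hn
      have : ∑ j ∈ Finset.range n, f k j = ∑ j ∈ Finset.Ico k n, (ρ j - ρ (j + 1)) := by
        rw [Finset.range_eq_Ico, ← Finset.sum_Ico_consecutive _ (Nat.zero_le k) hn]
        have h1 : ∑ j ∈ Finset.Ico 0 k, f k j = 0 := by
          apply Finset.sum_eq_zero
          intro j hj
          rw [Finset.mem_Ico] at hj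
          rw [hstep j, if_neg (by omega)]
        have h2 : ∑ j ∈ Finset.Ico k n, f k j = ∑ j ∈ Finset.Ico k n, (ρ j - ρ (j + 1)) := by
          apply Finset.sum_congr rfl
          intro j hj
          rw [Finset.mem_Ico] at hj
          rw [hstep j, if_pos hj.1]
        rw [h1, h2, zero_add]
      rw [this, Finset.sum_Ico_eq_sum_range]
      have := Finset.sum_range_sub' (fun i => ρ (k + i)) (n - k)
      simp only [add_zero, Nat.add_sub_cancel' hn] at this
      rw [← this]
      apply Finset.sum_congr rfl
      intro i _
      simp [Nat.add_assoc]
    have h1 : Filter.Tendsto (fun n => ∑ j ∈ Finset.range n, f k j)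
        Filter.atTop (nhds (∑' j, f k j)) := (hfsummable k).hasSum.tendsto_sum_nat
    have h2 : Filter.Tendsto (fun n : ℕ => ρ k - ρ n) Filter.atTop (nhds (ρ k - 0)) :=
      Filter.Tendsto.const_sub _ hsum.tendsto_atTop_zero
    have h3 : Filter.Tendsto (fun n => ∑ j ∈ Finset.range n, f k j)
        Filter.atTop (nhds (ρ k - 0)) := by
      apply h2.congr'
      filter_upwards [Filter.eventually_ge_atTop k] with n hn
      exact (htel n hn).symm
    have := tendsto_nhds_unique h1 h3
    rw [this]; ring
  · -- backward: identity ⇒ Poisson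
    intro h
    have hrec : ∀ k : ℕ, ρ (k + 1) = lam / ((k:ℝ) + 1) * ρ k := by
      intro k
      have hdiff : ρ k - ρ (k + 1) = ∑' j, (f k j - f (k + 1) j) := by
        rw [Summable.tsum_sub (hfsummable k) (hfsummable (k + 1))]
        rw [← h k, ← h (k + 1)]
      have hsingle : ∑' j, (f k j - f (k + 1) j) = (1 - lam / ((k:ℝ) + 1)) * ρ k := by
        rw [tsum_eq_single k]
        · simp only [hf]
          rw [if_pos (le_refl k), if_neg (by omega)]
          ring
        · intro j hj
          simp only [hf]
          rcases lt_or_gt_of_ne hj with hlt | hgt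
          · rw [if_neg (by omega), if_neg (by omega)]; ring
          · rw [if_pos (by omega), if_pos (by omega)]; ring
      rw [hsingle] at hdiff
      have : ρ (k + 1) = ρ k - (1 - lam / ((k:ℝ) + 1)) * ρ k := by linarith
      rw [this]; ring
    have hform : ∀ k : ℕ, ρ k = ρ 0 * (lam ^ k / (Nat.factorial k : ℝ)) := by
      intro k
      induction k with
      | zero => simp
      | succ n ih =>
        rw [hrec n, ih]
        have hfac : (Nat.factorial (n + 1) : ℝ) = ((n:ℝ) + 1) * (Nat.factorial n : ℝ) := by
          push_cast [Nat.factorial_succ]; ring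
        rw [hfac]
        have hj1 : ((n:ℝ) + 1) ≠ 0 := by positivity
        have hfj : (Nat.factorial n : ℝ) ≠ 0 := by positivity
        field_simp
        ring
    have hexp : ∑' k : ℕ, lam ^ k / (Nat.factorial k : ℝ) = Real.exp lam := by
      rw [Real.exp_eq_exp_ℝ, NormedSpace.exp_eq_tsum_div]
    have h0 : ρ 0 = Real.exp (-lam) := by
      have : (1:ℝ) = ρ 0 * Real.exp lam := by
        rw [← hρsum]
        rw [tsum_congr hform, tsum_mul_left, hexp]
      rw [Real.exp_neg]
      field_simp [Real.exp_ne_zero] at this ⊢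
      linarith
    intro k
    rw [hform k, h0]
    ring
end

section
/- For the negative binomial distribution with parameters r ∈ (0,1] and q ∈ (0,1), for every k ∈ ℕ₀ the tail ratio satisfies (1 - P(k))/p(k+1) ≤ 1/q, where p is the pmf and P the CDF. -/
/-!
The pmf sums to one by the binomial series `(1 - x)⁻ʳ = ∑ₖ C(r + k - 1, k) xᵏ`, so `1 - P k` is the
tail `∑ᵢ p (k + 1 + i)`. For `r ≤ 1` the coefficients `Γ(k + r) / (Γ(r) k!)` are nonincreasing, so
`p (m + 1) ≤ (1 - q) p m` and the tail is dominated by the geometric series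
`p (k + 1) ∑ᵢ (1 - q)ⁱ = p (k + 1) / q`.
-/

open Real
open scoped Nat

noncomputable def negBinomialCoeff (r : ℝ) (k : ℕ) : ℝ :=
  Gamma (k + r) / (Gamma r * k !)

theorem Real.Gamma_nat_add_eq_mul_ascPochhammer {r : ℝ} (hr : 0 < r) (k : ℕ) :
    Gamma (k + r) = Gamma r * (ascPochhammer ℝ k).eval r := by
  induction k with
  | zero => simp
  | succ k ih =>
    rw [Nat.cast_succ, add_right_comm, Gamma_add_one (by positivity), ih, ascPochhammer_succ_eval]
    ring

namespace negBinomialCoeff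

variable {r : ℝ}

theorem eq_ascPochhammer_div_factorial (hr : 0 < r) (k : ℕ) :
    negBinomialCoeff r k = (ascPochhammer ℝ k).eval r / k ! := by
  rw [negBinomialCoeff, Gamma_nat_add_eq_mul_ascPochhammer hr,
    mul_div_mul_left _ _ (Gamma_pos_of_pos hr).ne']

theorem eq_choose (hr : 0 < r) (k : ℕ) : negBinomialCoeff r k = Ring.choose (r + k - 1) k := by
  rw [eq_ascPochhammer_div_factorial hr, ← Ring.multichoose_eq,
    ← Polynomial.ascPochhammer_smeval_eq_eval, ← Ring.factorial_nsmul_multichoose_eq_ascPochhammer,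
    nsmul_eq_mul, mul_div_cancel_left₀ _ (by positivity)]

theorem pos (hr : 0 < r) (k : ℕ) : 0 < negBinomialCoeff r k := by
  rw [eq_ascPochhammer_div_factorial hr]
  exact div_pos (ascPochhammer_pos k r hr) (by positivity)

theorem succ (hr : 0 < r) (k : ℕ) :
    negBinomialCoeff r (k + 1) = (k + r) / (k + 1) * negBinomialCoeff r k := by
  rw [eq_ascPochhammer_div_factorial hr, eq_ascPochhammer_div_factorial hr,
    ascPochhammer_succ_eval, Nat.factorial_succ]
  push_cast
  field_simp
  ring

theorem succ_le (hr0 : 0 < r) (hr1 : r ≤ 1) (k : ℕ) :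
    negBinomialCoeff r (k + 1) ≤ negBinomialCoeff r k := by
  rw [succ hr0]
  exact mul_le_of_le_one_left (pos hr0 k).le ((div_le_one (by positivity)).2 (by linarith))

theorem hasSum_mul_pow {x : ℝ} (hr : 0 < r) (hx : |x| < 1) :
    HasSum (fun k ↦ negBinomialCoeff r k * x ^ k) (1 / (1 - x) ^ r) := by
  have := (one_div_one_sub_rpow_hasFPowerSeriesOnBall_zero r).hasSum
    (y := x) (by simpa [enorm_eq_nnnorm, ← NNReal.coe_lt_one] using hx)
  simpa [FormalMultilinearSeries.ofScalars_apply_eq, eq_choose hr, mul_comm] using this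

theorem hasSum_mul_pow_mul_rpow {q : ℝ} (hr : 0 < r) (hq0 : 0 < q) (hq1 : q < 1) :
    HasSum (fun k ↦ negBinomialCoeff r k * (1 - q) ^ k * q ^ r) 1 := by
  have h := (hasSum_mul_pow hr (x := 1 - q) (by rw [abs_lt]; constructor <;> linarith)).mul_right
    (q ^ r)
  rwa [sub_sub_cancel, one_div_mul_cancel (by positivity)] at h

end negBinomialCoeff

theorem tsum_nat_add_le_div_one_sub {p : ℕ → ℝ} {x : ℝ} (hp : ∀ m, 0 ≤ p m) (hx0 : 0 ≤ x)
    (hx1 : x < 1) (hratio : ∀ m, p (m + 1) ≤ x * p m) (n : ℕ) :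
    ∑' i, p (i + n) ≤ p n / (1 - x) := by
  have hgeom : ∀ i, p (i + n) ≤ p n * x ^ i := fun i ↦ by
    simpa [mul_comm, add_right_comm] using le_geom (u := fun i ↦ p (i + n)) hx0 i
      fun m _ ↦ by simpa [add_right_comm] using hratio (m + n)
  have hsum : Summable fun i ↦ p n * x ^ i := (summable_geometric_of_lt_one hx0 hx1).mul_left _
  calc ∑' i, p (i + n) ≤ ∑' i, p n * x ^ i :=
        (hsum.of_nonneg_of_le (fun i ↦ hp _) hgeom).tsum_le_tsum hgeom hsum
    _ = p n / (1 - x) := by rw [tsum_mul_left, tsum_geometric_of_lt_one hx0 hx1, div_eq_mul_inv]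

/-- Negative binomial tail-ratio bound for `r ∈ (0,1]`: `(1 - P(k))/p(k+1) ≤ 1/q`. -/
theorem stmt_9 (r q : ℝ) (hr0 : 0 < r) (hr1 : r ≤ 1) (hq0 : 0 < q) (hq1 : q < 1)
    (p : ℕ → ℝ) (P : ℕ → ℝ)
    (hp : ∀ k : ℕ, p k = Real.Gamma ((k : ℝ) + r) / (Real.Gamma r * (Nat.factorial k : ℝ))
      * (1 - q) ^ k * q ^ r)
    (hP : ∀ k : ℕ, P k = ∑ ℓ ∈ Finset.range (k + 1), p ℓ) :
    ∀ k : ℕ, (1 - P k) / p (k + 1) ≤ 1 / q := by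
  have hp' : p = fun k ↦ negBinomialCoeff r k * (1 - q) ^ k * q ^ r := funext hp
  have hq : 0 < 1 - q := sub_pos.2 hq1
  have hpos : ∀ m, 0 < p m := fun m ↦ by
    have := negBinomialCoeff.pos hr0 m
    rw [hp']
    positivity
  have hsum : HasSum p 1 := hp' ▸ negBinomialCoeff.hasSum_mul_pow_mul_rpow hr0 hq0 hq1
  have hratio : ∀ m, p (m + 1) ≤ (1 - q) * p m := fun m ↦ by
    simp only [hp']
    calc _ = (1 - q) * (negBinomialCoeff r (m + 1) * (1 - q) ^ m * q ^ r) := by ring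
      _ ≤ _ := by gcongr; exact negBinomialCoeff.succ_le hr0 hr1 m
  intro k
  have htail : 1 - P k = ∑' i, p (i + (k + 1)) := by
    rw [hP, ← hsum.tsum_eq, ← hsum.summable.sum_add_tsum_nat_add (k + 1), add_sub_cancel_left]
  have hbound := tsum_nat_add_le_div_one_sub (fun m ↦ (hpos m).le) hq.le (by linarith)
    hratio (k + 1)
  rw [sub_sub_cancel] at hbound
  rw [htail, div_le_iff₀ (hpos _), one_div_mul_eq_div]
  exact hbound
end

section
/- A random variable X : Ω → ℕ₀ with E[X] < ∞ follows the negative binomial distribution with parameters r > 0 and q ∈ (0,1) if and only if its pmf ρ satisfies ρ(k) = E[(1 - (r+X)(1-q)/(X+1))·1{X ≥ k}] for all k ∈ ℕ₀. -/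
open Finset

private lemma nb_gamma_prod (r : ℝ) (hr : 0 < r) (n : ℕ) :
    Real.Gamma ((n : ℝ) + r) = (∏ i ∈ Finset.range n, (r + (i : ℝ))) * Real.Gamma r := by
  induction n with
  | zero => simp
  | succ n ih =>
    have h1 : ((n + 1 : ℕ) : ℝ) + r = ((n : ℝ) + r) + 1 := by push_cast; ring
    have hne : ((n : ℝ) + r) ≠ 0 := by positivity
    rw [h1, Real.Gamma_add_one hne, ih, Finset.prod_range_succ]
    ring

private lemma nb_hasSum_binomial (r : ℝ) (hr : 0 < r) {x : ℝ} (hx0 : 0 ≤ x) (hx1 : x < 1) :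
    HasSum (fun n : ℕ => (∏ i ∈ Finset.range n, (r + (i : ℝ))) / (n.factorial : ℝ) * x ^ n)
      ((1 - x) ^ (-r : ℝ)) := by
  set f : ℂ → ℂ := fun z => (1 - z) ^ (-r : ℂ) with hf
  have hslit : ∀ z ∈ Metric.ball (0 : ℂ) 1, (1 - z) ∈ Complex.slitPlane := by
    intro z hz
    rw [Complex.mem_slitPlane_iff]
    left
    have h1 : ‖z‖ < 1 := by simpa using Metric.mem_ball.mp hz
    have h2 := Complex.re_le_norm z
    simp only [Complex.sub_re, Complex.one_re]
    linarith
  have hderiv : ∀ (t : ℂ), ∀ z ∈ Metric.ball (0 : ℂ) 1,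
      HasDerivAt (fun w => (1 - w) ^ t) (-(t * (1 - z) ^ (t - 1))) z := by
    intro t z hz
    have h := HasDerivAt.cpow_const (c := t) (HasDerivAt.const_sub (1 : ℂ) (hasDerivAt_id z)) (hslit z hz)
    convert h using 1
    all_goals simp only [id_eq]
    ring
  have hdiff : DifferentiableOn ℂ f (Metric.ball (0 : ℂ) 1) := fun z hz =>
    ((hderiv _ z hz).differentiableAt).differentiableWithinAt
  have hiter : ∀ n : ℕ, ∀ z ∈ Metric.ball (0 : ℂ) 1,
      iteratedDeriv n f z
        = (∏ i ∈ Finset.range n, ((r : ℂ) + (i : ℂ))) * (1 - z) ^ (-(r : ℂ) - (n : ℂ)) := by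
    intro n
    induction n with
    | zero => intro z hz; simp [f]
    | succ n ih =>
      intro z hz
      rw [iteratedDeriv_succ]
      have hev : iteratedDeriv n f =ᶠ[nhds z]
          fun w => (∏ i ∈ Finset.range n, ((r : ℂ) + (i : ℂ))) * (1 - w) ^ (-(r : ℂ) - (n : ℂ)) :=
        Filter.eventuallyEq_of_mem (Metric.isOpen_ball.mem_nhds hz) (fun w hw => ih w hw)
      rw [hev.deriv_eq]
      rw [((hderiv (-(r : ℂ) - (n : ℂ)) z hz).const_mul
        (∏ i ∈ Finset.range n, ((r : ℂ) + (i : ℂ)))).deriv]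
      have hexp : (-(r : ℂ) - (n : ℂ) - 1) = (-(r : ℂ) - ((n + 1 : ℕ) : ℂ)) := by
        push_cast; ring
      rw [hexp, Finset.prod_range_succ]
      push_cast
      ring
  have hx : ((x : ℂ)) ∈ Metric.ball (0 : ℂ) 1 := by
    simp [Metric.mem_ball, Complex.norm_real, abs_of_nonneg hx0, hx1]
  have H := Complex.hasSum_taylorSeries_on_ball hdiff hx
  simp only [sub_zero, smul_eq_mul] at H
  have h0ball : (0 : ℂ) ∈ Metric.ball (0 : ℂ) 1 := by simp
  have H2 : HasSum (fun n : ℕ =>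
      ((((∏ i ∈ Finset.range n, (r + (i : ℝ))) / (n.factorial : ℝ) * x ^ n : ℝ)) : ℂ)) (f x) := by
    convert H using 3 with n
    · rfl
    rw [hiter n 0 h0ball]
    simp only [sub_zero, Complex.one_cpow]
    push_cast
    ring
  have hfx : f (x : ℂ) = (((1 - x) ^ (-r : ℝ) : ℝ) : ℂ) := by
    rw [hf]
    rw [Complex.ofReal_cpow (by linarith : (0:ℝ) ≤ 1 - x)]
    push_cast
    ring_nf
  rw [hfx] at H2
  exact Complex.hasSum_ofReal.mp H2

private lemma nb_tsum_ite_ge {f : ℕ → ℝ} (hf : Summable f) (k : ℕ) :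
    ∑' j : ℕ, (if k ≤ j then f j else 0) = ∑' j : ℕ, f (j + k) := by
  have hs : Summable (fun j => if k ≤ j then f j else 0) := by
    refine Summable.of_norm_bounded hf.abs (fun j => ?_)
    by_cases h : k ≤ j <;> simp [h, abs_nonneg]
  rw [← Summable.sum_add_tsum_nat_add k hs]
  have h1 : ∑ j ∈ Finset.range k, (if k ≤ j then f j else 0) = 0 := by
    apply Finset.sum_eq_zero
    intro j hj
    simp [Nat.not_le.mpr (Finset.mem_range.mp hj)]
  rw [h1, zero_add]
  exact tsum_congr fun j => by simp [Nat.le_add_left]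

/-- Stein characterization of the negative binomial distribution: an ℕ₀-valued random
variable with finite mean has pmf NB(r,q) iff
`ρ k = E[(1 - (r+X)(1-q)/(X+1))·1{X ≥ k}]` for all k. -/
theorem stmt_11 (r q : ℝ) (hr : 0 < r) (hq0 : 0 < q) (hq1 : q < 1) (ρ : ℕ → ℝ)
    (hρnonneg : ∀ k, 0 ≤ ρ k)
    (hρsum : ∑' k : ℕ, ρ k = 1)
    (hmean : Summable (fun k : ℕ => (k : ℝ) * ρ k)) :
    (∀ k : ℕ, ρ k = Real.Gamma ((k : ℝ) + r) / (Real.Gamma r * (Nat.factorial k : ℝ))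
        * (1 - q) ^ k * q ^ r) ↔
    (∀ k : ℕ, ρ k = ∑' j : ℕ,
      (1 - (r + j) * (1 - q) / ((j : ℝ) + 1)) * (if k ≤ j then (1 : ℝ) else 0) * ρ j) := by
  have hSumrho : Summable ρ := by
    by_contra h
    rw [tsum_eq_zero_of_not_summable h] at hρsum
    norm_num at hρsum
  set g : ℕ → ℝ := fun j => (1 - (r + j) * (1 - q) / ((j : ℝ) + 1)) * ρ j with hgdef
  have hcoef_bound : ∀ j : ℕ, |1 - (r + j) * (1 - q) / ((j : ℝ) + 1)| ≤ r + 2 := by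
    intro j
    have hj1 : (0:ℝ) < (j : ℝ) + 1 := by positivity
    have h1 : (0:ℝ) ≤ (r + j) * (1 - q) / ((j : ℝ) + 1) := by
      apply div_nonneg _ hj1.le
      apply mul_nonneg (by positivity) (by linarith)
    have h2 : (r + j) * (1 - q) / ((j : ℝ) + 1) ≤ r + 1 := by
      rw [div_le_iff₀ hj1]
      nlinarith [hρnonneg j, (Nat.cast_nonneg j : (0:ℝ) ≤ (j:ℝ)), hq0.le, hq1.le]
    rw [abs_le]; constructor <;> nlinarith
  have hSumg : Summable g := by
    refine Summable.of_norm_bounded (hSumrho.mul_left (r + 2)) (fun j => ?_)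
    rw [hgdef]
    simp only [Real.norm_eq_abs, abs_mul, abs_of_nonneg (hρnonneg j)]
    exact mul_le_mul_of_nonneg_right (hcoef_bound j) (hρnonneg j)
  -- the RHS sum equals the tail sum of g
  have hS : ∀ k : ℕ, ∑' j : ℕ,
      (1 - (r + j) * (1 - q) / ((j : ℝ) + 1)) * (if k ≤ j then (1 : ℝ) else 0) * ρ j
      = ∑' j : ℕ, g (j + k) := by
    intro k
    rw [← nb_tsum_ite_ge hSumg k]
    refine tsum_congr fun j => ?_
    by_cases h : k ≤ j <;> simp [h, hgdef] <;> ring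
  have htail : ∀ (f : ℕ → ℝ), Summable f → ∀ k : ℕ,
      ∑' j : ℕ, f (j + k) = (∑' j : ℕ, f j) - ∑ i ∈ Finset.range k, f i := by
    intro f hf k
    rw [← Summable.sum_add_tsum_nat_add k hf]
    ring
  constructor
  · -- forward
    intro hNB k
    have hrec : ∀ j : ℕ, g j = ρ j - ρ (j + 1) := by
      intro j
      have hΓ : Real.Gamma (((j + 1 : ℕ) : ℝ) + r) = ((j : ℝ) + r) * Real.Gamma ((j : ℝ) + r) := by
        have h1 : ((j + 1 : ℕ) : ℝ) + r = ((j : ℝ) + r) + 1 := by push_cast; ring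
        rw [h1, Real.Gamma_add_one (by positivity)]
      have h1 := hNB j
      have h2 := hNB (j + 1)
      rw [hΓ] at h2
      have hfact : ((j + 1).factorial : ℝ) = ((j : ℝ) + 1) * (j.factorial : ℝ) := by
        rw [Nat.factorial_succ]; push_cast; ring
      rw [hfact] at h2
      have hΓr : Real.Gamma r ≠ 0 := (Real.Gamma_pos_of_pos hr).ne'
      have hjf : (j.factorial : ℝ) ≠ 0 := Nat.cast_ne_zero.mpr j.factorial_ne_zero
      have hj1 : ((j : ℝ) + 1) ≠ 0 := by positivity
      rw [hgdef]
      simp only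
      rw [h1, h2]
      field_simp
      ring
    rw [hS k]
    symm
    have h2 : ∀ j : ℕ, g (j + k) = ρ (j + k) - ρ (j + (k + 1)) := by
      intro j
      rw [show j + (k + 1) = (j + k) + 1 from by omega, hrec (j + k)]
    calc ∑' j : ℕ, g (j + k) = ∑' j : ℕ, (ρ (j + k) - ρ (j + (k + 1))) := tsum_congr h2
      _ = (∑' j : ℕ, ρ (j + k)) - ∑' j : ℕ, ρ (j + (k + 1)) :=
          Summable.tsum_sub ((summable_nat_add_iff k).mpr hSumrho) ((summable_nat_add_iff (k+1)).mpr hSumrho)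
      _ = ρ k := by
          rw [htail ρ hSumrho k, htail ρ hSumrho (k + 1), Finset.sum_range_succ]
          ring
  · -- backward
    intro hSt
    have hrec : ∀ k : ℕ, ρ (k + 1) = (r + k) * (1 - q) / ((k : ℝ) + 1) * ρ k := by
      intro k
      have h1 : ρ k - ρ (k + 1) = g k := by
        have e1 : ρ k = ∑' j : ℕ, g (j + k) := by rw [hSt k, hS k]
        have e2 : ρ (k + 1) = ∑' j : ℕ, g (j + (k + 1)) := by rw [hSt (k + 1), hS (k + 1)]
        rw [e1, e2, htail g hSumg k, htail g hSumg (k + 1), Finset.sum_range_succ]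
        ring
      have h2 : g k = ρ k - (r + k) * (1 - q) / ((k : ℝ) + 1) * ρ k := by
        rw [hgdef]; ring
      nlinarith [h1, h2]
    set a : ℕ → ℝ := fun n =>
      (∏ i ∈ Finset.range n, (r + (i : ℝ))) / (n.factorial : ℝ) * (1 - q) ^ n with hadef
    have hρa : ∀ k : ℕ, ρ k = ρ 0 * a k := by
      intro k
      induction k with
      | zero => simp [hadef]
      | succ k ih =>
        rw [hrec k, ih]
        rw [hadef]
        simp only
        rw [Finset.prod_range_succ, Nat.factorial_succ]
        push_cast
        have hj1 : ((k : ℝ) + 1) ≠ 0 := by positivity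
        have hkf : (k.factorial : ℝ) ≠ 0 := Nat.cast_ne_zero.mpr k.factorial_ne_zero
        field_simp
        ring
    have hbin : HasSum a ((1 - (1 - q)) ^ (-r : ℝ)) :=
      nb_hasSum_binomial r hr (by linarith) (by linarith)
    have hq' : (1 : ℝ) - (1 - q) = q := by ring
    rw [hq'] at hbin
    have hqr : (0:ℝ) < q ^ (-r : ℝ) := Real.rpow_pos_of_pos hq0 _
    have hρ0 : ρ 0 = q ^ (r : ℝ) := by
      have h1 : ∑' k : ℕ, ρ k = ρ 0 * q ^ (-r : ℝ) := by
        rw [tsum_congr hρa, tsum_mul_left, hbin.tsum_eq]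
      rw [hρsum] at h1
      have h2 : ρ 0 = (q ^ (-r : ℝ))⁻¹ := by
        field_simp at h1 ⊢
        linarith
      rw [h2, ← Real.rpow_neg hq0.le, neg_neg]
    intro k
    rw [hρa k, hρ0, hadef]
    simp only
    rw [nb_gamma_prod r hr k]
    have hΓr : Real.Gamma r ≠ 0 := (Real.Gamma_pos_of_pos hr).ne'
    have hkf : (k.factorial : ℝ) ≠ 0 := Nat.cast_ne_zero.mpr k.factorial_ne_zero
    field_simp
end

section
/- For the discrete exponential-polynomial pmf p_θ on ℕ with θ_d < 0 and d ≥ 2, lim_{k→∞} p_θ(k+1)/(1 - P_θ(k)) = 1, where P_θ is the CDF. -/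
/-!
With `F x = ∑ i < d, θ i * x ^ (i + 1)` and `f k = exp (F (k + 1))`, the normalising constant is
`C = ∑ f`, `p (k + 1) = f k / C` and `1 - P k = (∑_{i ≥ k} f i) / C`. Since `F` has degree `d ≥ 2`
and negative leading coefficient, its forward difference `F (x + 1) - F x` has degree `d - 1 ≥ 1`
and tends to `-∞`, so `f (k + 1) / f k → 0`. Once `2 f (n + 1) ≤ f n`, the tail from `k` is at most
`2 f k`; hence the tail from `k + 1` is `o(f k)` and `f k / ∑_{i ≥ k} f i → 1`.
-/

open Filter Finset Real Topology

lemma pow_le_add_one_pow_succ_sub_pow {x : ℝ} (hx : 0 ≤ x) (n : ℕ) :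
    x ^ n ≤ (x + 1) ^ (n + 1) - x ^ (n + 1) := by
  have : x ^ n ≤ (x + 1) ^ n := pow_le_pow_left₀ hx (by linarith) n
  nlinarith [pow_succ x n, pow_succ (x + 1) n]

lemma sum_mul_add_one_pow_sub_pow_le (θ : ℕ → ℝ) (e : ℕ) {x : ℝ} (hx : 1 ≤ x) :
    ∑ i ∈ range (e + 1), θ i * ((x + 1) ^ (i + 1) - x ^ (i + 1))
      ≤ (∑ i ∈ range (e + 1), |θ i| * (i + 1)) * (2 * x) ^ e := by
  rw [sum_mul]
  refine sum_le_sum fun i hi => ?_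
  have hdiff : |(x + 1) ^ (i + 1) - x ^ (i + 1)| ≤ (i + 1) * (x + 1) ^ i := by
    simpa [abs_of_nonneg, show (0 : ℝ) ≤ x by linarith, show (0 : ℝ) ≤ x + 1 by linarith] using
      abs_pow_sub_pow_le (x + 1) x (i + 1)
  have hpow : (x + 1) ^ i ≤ (2 * x) ^ e :=
    (pow_le_pow_left₀ (by linarith) (by linarith) i).trans
      (pow_le_pow_right₀ (by linarith) (Nat.lt_succ_iff.mp (mem_range.mp hi)))
  calc θ i * ((x + 1) ^ (i + 1) - x ^ (i + 1))
      ≤ |θ i| * ((i + 1) * (x + 1) ^ i) :=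
        (le_abs_self _).trans ((abs_mul _ _).trans_le (by gcongr))
    _ ≤ |θ i| * (i + 1) * (2 * x) ^ e := by
        rw [mul_assoc]; gcongr

lemma tendsto_sum_mul_add_one_pow_sub_atBot (θ : ℕ → ℝ) (e : ℕ) (hθ : θ (e + 1) < 0) :
    Tendsto (fun x : ℝ => ∑ i ∈ range (e + 2), θ i * (x + 1) ^ (i + 1)
      - ∑ i ∈ range (e + 2), θ i * x ^ (i + 1)) atTop atBot := by
  set M := (∑ i ∈ range (e + 1), |θ i| * (i + 1)) * 2 ^ e
  have hlin : Tendsto (fun x : ℝ => θ (e + 1) * x + M) atTop atBot :=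
    tendsto_atBot_add_const_right _ M (tendsto_id.const_mul_atTop_of_neg hθ)
  refine tendsto_atBot_mono' atTop ?_ hlin
  filter_upwards [eventually_ge_atTop 1, hlin.eventually_le_atBot 0] with x hx hneg
  have hlow := sum_mul_add_one_pow_sub_pow_le θ e hx
  have htop := mul_le_mul_of_nonpos_left
    (pow_le_add_one_pow_succ_sub_pow (by linarith : (0 : ℝ) ≤ x) (e + 1)) hθ.le
  have hxe : 1 ≤ x ^ e := one_le_pow₀ hx
  rw [← sum_sub_distrib]
  simp only [← mul_sub]
  rw [sum_range_succ]
  calc _ ≤ (∑ i ∈ range (e + 1), |θ i| * (i + 1)) * (2 * x) ^ e + θ (e + 1) * x ^ (e + 1) :=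
        add_le_add hlow htop
    _ = x ^ e * (θ (e + 1) * x + M) := by rw [mul_pow, pow_succ]; ring
    _ ≤ θ (e + 1) * x + M := by nlinarith

section Tail

variable {f : ℕ → ℝ}

lemma summable_of_tendsto_div_zero (hf : ∀ n, 0 < f n)
    (hratio : Tendsto (fun n => f (n + 1) / f n) atTop (𝓝 0)) : Summable f :=
  summable_of_ratio_test_tendsto_lt_one zero_lt_one (.of_forall fun n => (hf n).ne') <| by
    simpa only [norm_of_nonneg (hf _).le] using hratio

lemma tsum_nat_add_eq_add_tsum_nat_add_one (hf : Summable f) (k : ℕ) :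
    ∑' i, f (i + k) = f k + ∑' i, f (i + (k + 1)) := by
  rw [((summable_nat_add_iff k).mpr hf).tsum_eq_zero_add]
  simp only [zero_add, add_right_comm _ 1 k, add_assoc]

lemma tsum_nat_add_le_two_mul (hf : Summable f) {N : ℕ} (hN : ∀ n ≥ N, 2 * f (n + 1) ≤ f n)
    {k : ℕ} (hk : N ≤ k) : ∑' i, f (i + k) ≤ 2 * f k := by
  have hsplit := tsum_nat_add_eq_add_tsum_nat_add_one hf k
  have hhalf : 2 * ∑' i, f (i + (k + 1)) ≤ ∑' i, f (i + k) := by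
    rw [← tsum_mul_left]
    refine Summable.tsum_le_tsum (fun i => ?_) (((summable_nat_add_iff _).mpr hf).mul_left 2)
      ((summable_nat_add_iff _).mpr hf)
    simpa only [← add_assoc] using hN (i + k) (by omega)
  linarith

lemma tendsto_div_tsum_nat_add_of_tendsto_div_zero (hf : ∀ n, 0 < f n)
    (hratio : Tendsto (fun n => f (n + 1) / f n) atTop (𝓝 0)) :
    Tendsto (fun k => f k / ∑' i, f (i + k)) atTop (𝓝 1) := by
  have hsum := summable_of_tendsto_div_zero hf hratio
  obtain ⟨N, hN⟩ := eventually_atTop.mp (hratio.eventually (eventually_le_nhds one_half_pos))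
  have hN' : ∀ n ≥ N, 2 * f (n + 1) ≤ f n := fun n hn => by
    have := hN n hn
    rw [div_le_iff₀ (hf n)] at this
    linarith
  have hrest : Tendsto (fun k => (∑' i, f (i + (k + 1))) / f k) atTop (𝓝 0) := by
    refine squeeze_zero' (.of_forall fun k => div_nonneg ?_ (hf k).le) ?_
      (by simpa using hratio.const_mul 2)
    · exact tsum_nonneg fun i => (hf _).le
    filter_upwards [eventually_ge_atTop N] with k hk
    rw [mul_div_assoc']
    exact div_le_div_of_nonneg_right (tsum_nat_add_le_two_mul hsum hN' (by omega)) (hf k).le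
  have hlim : Tendsto (fun k => (1 + (∑' i, f (i + (k + 1))) / f k)⁻¹) atTop (𝓝 1) := by
    simpa using (tendsto_const_nhds.add hrest).inv₀ (by norm_num : (1 : ℝ) + 0 ≠ 0)
  refine hlim.congr fun k => ?_
  rw [tsum_nat_add_eq_add_tsum_nat_add_one hsum k, one_add_div (hf k).ne', inv_div]

lemma tendsto_inv_tsum_mul_div_one_sub_sum_of_tendsto_div_zero (hf : ∀ n, 0 < f n)
    (hratio : Tendsto (fun n => f (n + 1) / f n) atTop (𝓝 0)) :
    Tendsto (fun k => (∑' i, f i)⁻¹ * f k / (1 - ∑ i ∈ range k, (∑' i, f i)⁻¹ * f i))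
      atTop (𝓝 1) := by
  have hsum := summable_of_tendsto_div_zero hf hratio
  have hC : 0 < ∑' i, f i := hsum.tsum_pos (fun i => (hf i).le) 0 (hf 0)
  refine (tendsto_div_tsum_nat_add_of_tendsto_div_zero hf hratio).congr fun k => ?_
  rw [← mul_sum, eq_sub_of_add_eq' (hsum.sum_add_tsum_nat_add k)]
  field_simp

end Tail

/-- For the discrete exponential-polynomial pmf on ℕ (θ_d < 0, d ≥ 2),
`p(k+1)/(1 - P(k)) → 1` as k → ∞ (Stolz–Cesàro). -/
theorem stmt_13 (d : ℕ) (hd : 2 ≤ d) (θ : ℕ → ℝ) (hθ : θ (d - 1) < 0)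
    (C : ℝ) (p : ℕ → ℝ) (P : ℕ → ℝ)
    (hC : C = ∑' k : ℕ, Real.exp (∑ i ∈ Finset.range d, θ i * ((k : ℝ) + 1) ^ (i + 1)))
    (hp : ∀ k : ℕ, 1 ≤ k →
      p k = C⁻¹ * Real.exp (∑ i ∈ Finset.range d, θ i * (k : ℝ) ^ (i + 1)))
    (hP : ∀ k : ℕ, P k = ∑ ℓ ∈ Finset.Icc 1 k, p ℓ) :
    Filter.Tendsto (fun k : ℕ => p (k + 1) / (1 - P k)) Filter.atTop (nhds 1) := by
  obtain ⟨e, rfl⟩ : ∃ e, d = e + 2 := ⟨d - 2, by omega⟩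
  set f : ℕ → ℝ := fun k => exp (∑ i ∈ range (e + 2), θ i * ((k : ℝ) + 1) ^ (i + 1))
  have hpos : ∀ n, 0 < f n := fun n => exp_pos _
  have hratio : Tendsto (fun n => f (n + 1) / f n) atTop (𝓝 0) := by
    refine (tendsto_exp_atBot.comp <| (tendsto_sum_mul_add_one_pow_sub_atBot θ e hθ).comp <|
      tendsto_atTop_add_const_right _ 1 tendsto_natCast_atTop_atTop).congr fun n => ?_
    simp only [f, Function.comp_apply, exp_sub, Nat.cast_add, Nat.cast_one]
  have hp' : ∀ k, p (k + 1) = C⁻¹ * f k := fun k => by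
    simpa [f] using hp (k + 1) le_add_self
  have hP' : ∀ k, P k = ∑ i ∈ range k, C⁻¹ * f i := fun k => by
    have hshift : ∑ ℓ ∈ Icc 1 k, p ℓ = ∑ i ∈ range k, p (i + 1) := by
      rw [range_eq_Ico, sum_Ico_add' p 0 k 1]; rfl
    rw [hP, hshift]
    exact sum_congr rfl fun i _ => hp' i
  subst hC
  exact (tendsto_inv_tsum_mul_div_one_sub_sum_of_tendsto_div_zero hpos hratio).congr
    fun k => by rw [hp', hP']
end

section
/- For the discrete exponential-polynomial model with θ_d < 0, limsup_{k→∞} |Δ⁺p_θ(k)·(1-P_θ(k))/(p_θ(k)·p_θ(k+1))| ≤ 1; in particular condition (C2) holds. -/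
/-!
With `u k = exp (q k)` we have `u (k + 1) / u k = exp (q (k + 1) - q k) → 0`, because
`q (k + 1) - q k` is a polynomial of degree `d - 1` with leading coefficient `d θ_{d-1} < 0`.
For weights with ratio tending to `0` the tail `S k = ∑_{j > k} u j` is dominated by a geometric
series with arbitrarily small ratio, so `S k / u k → 0` and `S k / u (k + 1) → 1`. The quantity
equals `S k / u k - S k / u (k + 1)` (the normalising constant cancels), hence tends to `-1`.
-/

open Filter Topology Asymptotics Finset

lemma tendsto_add_one_pow_sub_pow_div_pow (n : ℕ) :
    Tendsto (fun x : ℝ => ((x + 1) ^ (n + 1) - x ^ (n + 1)) / x ^ n) atTop (𝓝 (n + 1)) := by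
  -- with `t = x⁻¹` the quotient is the difference quotient of `t ↦ t ^ (n + 1)` at `1`
  have hslope := hasDerivAt_iff_tendsto_slope_zero.mp (hasDerivAt_pow (n + 1) (1 : ℝ))
  have hinv : Tendsto (fun x : ℝ => x⁻¹) atTop (𝓝[≠] 0) :=
    tendsto_inv_atTop_nhdsGT_zero.mono_right (nhdsWithin_mono _ fun _ h => ne_of_gt h)
  refine ((hslope.comp hinv).congr' ?_).trans_eq ?_
  · filter_upwards [eventually_gt_atTop 0] with x hx
    have hx' : 1 + x⁻¹ = (x + 1) / x := by field_simp
    simp only [Function.comp_apply, smul_eq_mul, inv_inv, one_pow, hx', div_pow]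
    field_simp
    ring
  · simp

lemma tendsto_sum_mul_add_one_pow_sub_pow_atBot (m : ℕ) (a : ℕ → ℝ) (ha : a (m + 1) < 0) :
    Tendsto (fun x : ℝ => ∑ i ∈ range (m + 2), a i * ((x + 1) ^ (i + 1) - x ^ (i + 1)))
      atTop atBot := by
  have hlower : (fun x : ℝ => ∑ i ∈ range (m + 1), a i * ((x + 1) ^ (i + 1) - x ^ (i + 1)))
      =o[atTop] fun x => x ^ (m + 1) := by
    refine IsLittleO.fun_sum fun i hi => ?_
    have hbig : (fun x : ℝ => (x + 1) ^ (i + 1) - x ^ (i + 1)) =O[atTop] fun x => x ^ i :=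
      isBigO_of_div_tendsto_nhds (by
        filter_upwards [eventually_gt_atTop 0] with x hx h
        exact absurd h (pow_pos hx i).ne') _ (tendsto_add_one_pow_sub_pow_div_pow i)
    exact (hbig.const_mul_left (a i)).trans_isLittleO
      (isLittleO_pow_pow_atTop_of_lt (mem_range.mp hi))
  have hratio : Tendsto (fun x : ℝ =>
      (∑ i ∈ range (m + 2), a i * ((x + 1) ^ (i + 1) - x ^ (i + 1))) / x ^ (m + 1))
      atTop (𝓝 (a (m + 1) * (m + 2))) := by
    have := hlower.tendsto_div_nhds_zero.add
      ((tendsto_add_one_pow_sub_pow_div_pow (m + 1)).const_mul (a (m + 1)))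
    simp only [zero_add, Nat.cast_add, Nat.cast_one, add_assoc, one_add_one_eq_two] at this
    refine this.congr fun x => ?_
    rw [sum_range_succ _ (m + 1), add_div, mul_div_assoc]
    rfl
  refine (hratio.neg_mul_atTop (by nlinarith) (tendsto_pow_atTop m.succ_ne_zero)).congr' ?_
  filter_upwards [eventually_gt_atTop 0] with x hx
  exact div_mul_cancel₀ _ (pow_pos hx _).ne'

section RatioTendstoZero

variable {u : ℕ → ℝ} (hu : ∀ n, 0 < u n)
  (hρ : Tendsto (fun n => u (n + 1) / u n) atTop (𝓝 0))
include hu hρ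

lemma summable_of_ratio_tendsto_zero : Summable u :=
  summable_of_ratio_test_tendsto_lt_one zero_lt_one (.of_forall fun n => (hu n).ne')
    (by simpa only [Real.norm_of_nonneg (hu _).le] using hρ)

lemma eventually_forall_le_pow_mul {r : ℝ} (hr : 0 < r) :
    ∀ᶠ n in atTop, ∀ j, u (j + n) ≤ r ^ j * u n := by
  obtain ⟨N, hN⟩ := eventually_atTop.mp (hρ.eventually_le_const hr)
  filter_upwards [eventually_ge_atTop N] with n hn j
  induction j with
  | zero => simp
  | succ j ih =>
    have hstep : u (j + n + 1) ≤ r * u (j + n) :=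
      (div_le_iff₀ (hu _)).mp (hN _ (by omega))
    calc u (j + 1 + n) = u (j + n + 1) := by rw [Nat.add_right_comm]
      _ ≤ r * (r ^ j * u n) := hstep.trans (mul_le_mul_of_nonneg_left ih hr.le)
      _ = r ^ (j + 1) * u n := by ring

lemma eventually_tsum_nat_add_succ_le {r : ℝ} (hr₀ : 0 < r) (hr₁ : r < 1) :
    ∀ᶠ n in atTop, ∑' j, u (j + n + 1) ≤ r / (1 - r) * u n := by
  filter_upwards [eventually_forall_le_pow_mul hu hρ hr₀] with n hn
  have hgeom : HasSum (fun j => r ^ (j + 1) * u n) (r / (1 - r) * u n) := by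
    simpa [pow_succ', mul_assoc, div_eq_mul_inv, mul_comm, mul_left_comm] using
      ((hasSum_geometric_of_lt_one hr₀.le hr₁).mul_left (r * u n))
  have htail : Summable fun j => u (j + n + 1) :=
    (summable_nat_add_iff (n + 1)).mpr (summable_of_ratio_tendsto_zero hu hρ)
  refine hasSum_le (fun j => ?_) htail.hasSum hgeom
  simpa only [Nat.add_right_comm j 1 n] using hn (j + 1)

lemma tendsto_tsum_nat_add_succ_div_self :
    Tendsto (fun n => (∑' j, u (j + n + 1)) / u n) atTop (𝓝 0) := by
  refine tendsto_order.2 ⟨fun a ha => .of_forall fun n =>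
    ha.trans_le (div_nonneg (tsum_nonneg fun _ => (hu _).le) (hu n).le), fun a ha => ?_⟩
  -- `r = a / (a + 2)` is chosen so that `r / (1 - r) = a / 2`
  have hr₀ : 0 < a / (a + 2) := by positivity
  have hr₁ : a / (a + 2) < 1 := (div_lt_one (by positivity)).mpr (by linarith)
  filter_upwards [eventually_tsum_nat_add_succ_le hu hρ hr₀ hr₁] with n hn
  rw [div_lt_iff₀ (hu n)]
  calc _ ≤ _ := hn
    _ = a / 2 * u n := by field_simp; ring
    _ < a * u n := by nlinarith [hu n]

lemma tendsto_tsum_nat_add_succ_div_succ :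
    Tendsto (fun n => (∑' j, u (j + n + 1)) / u (n + 1)) atTop (𝓝 1) := by
  have hnext := ((tendsto_tsum_nat_add_succ_div_self hu hρ).comp
    (tendsto_add_atTop_nat 1)).const_add 1
  rw [add_zero] at hnext
  refine hnext.congr fun n => ?_
  have htail : Summable fun j => u (j + n + 1) :=
    (summable_nat_add_iff (n + 1)).mpr (summable_of_ratio_tendsto_zero hu hρ)
  rw [htail.tsum_eq_zero_add, add_div, zero_add, div_self (hu _).ne']
  simp only [Function.comp_apply, Nat.add_right_comm _ 1 n]
  rfl

lemma tendsto_sub_mul_tsum_div_mul :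
    Tendsto (fun n => (u (n + 1) - u n) * (∑' j, u (j + n + 1)) / (u n * u (n + 1)))
      atTop (𝓝 (-1)) := by
  have h := (tendsto_tsum_nat_add_succ_div_self hu hρ).sub
    (tendsto_tsum_nat_add_succ_div_succ hu hρ)
  rw [zero_sub] at h
  refine h.congr fun n => ?_
  have := (hu n).ne'
  have := (hu (n + 1)).ne'
  field_simp

lemma tendsto_abs_sub_mul_one_sub_cdf_div {C : ℝ} {p P : ℕ → ℝ}
    (hC : C = ∑' k, u (k + 1)) (hp : ∀ k, 1 ≤ k → p k = C⁻¹ * u k)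
    (hP : ∀ k, P k = ∑ ℓ ∈ Icc 1 k, p ℓ) :
    Tendsto (fun k => |(p (k + 1) - p k) * (1 - P k) / (p k * p (k + 1))|) atTop (𝓝 1) := by
  have hsum : Summable fun k => u (k + 1) :=
    (summable_nat_add_iff 1).mpr (summable_of_ratio_tendsto_zero hu hρ)
  have hC₀ : C ≠ 0 := (hC ▸ hsum.tsum_pos (fun _ => (hu _).le) 0 (hu 1)).ne'
  have hcdf : ∀ k, 1 - P k = C⁻¹ * ∑' j, u (j + k + 1) := by
    intro k
    have hPk : P k = C⁻¹ * ∑ i ∈ range k, u (i + 1) := by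
      rw [hP, ← Ico_add_one_right_eq_Icc, sum_Ico_eq_sum_range, Nat.add_sub_cancel, mul_sum]
      exact sum_congr rfl fun i _ => by rw [hp _ (by omega), add_comm 1 i]
    have hsplit := hsum.sum_add_tsum_nat_add k
    rw [← hC] at hsplit
    rw [hPk]
    field_simp
    linarith
  have h := (tendsto_sub_mul_tsum_div_mul hu hρ).abs
  rw [abs_neg, abs_one] at h
  refine h.congr' ?_
  filter_upwards [eventually_ge_atTop 1] with k hk
  have := (hu k).ne'
  have := (hu (k + 1)).ne'
  rw [hcdf, hp k hk, hp (k + 1) (by omega)]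
  field_simp

end RatioTendstoZero

/-- Condition (C2) for the discrete exponential-polynomial model:
`limsup_k |Δ⁺p(k)(1-P(k))/(p(k)p(k+1))| ≤ 1`, and in particular the quantity is bounded. -/
theorem stmt_14 (d : ℕ) (hd : 2 ≤ d) (θ : ℕ → ℝ) (hθ : θ (d - 1) < 0)
    (C : ℝ) (p : ℕ → ℝ) (P : ℕ → ℝ)
    (hC : C = ∑' k : ℕ, Real.exp (∑ i ∈ Finset.range d, θ i * ((k : ℝ) + 1) ^ (i + 1)))
    (hp : ∀ k : ℕ, 1 ≤ k →
      p k = C⁻¹ * Real.exp (∑ i ∈ Finset.range d, θ i * (k : ℝ) ^ (i + 1)))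
    (hP : ∀ k : ℕ, P k = ∑ ℓ ∈ Finset.Icc 1 k, p ℓ) :
    Filter.limsup (fun k : ℕ =>
        |(p (k + 1) - p k) * (1 - P k) / (p k * p (k + 1))|) Filter.atTop ≤ 1 ∧
    ∃ M : ℝ, ∀ k : ℕ, 1 ≤ k →
      |(p (k + 1) - p k) * (1 - P k) / (p k * p (k + 1))| ≤ M := by
  obtain ⟨m, rfl⟩ : ∃ m, d = m + 2 := ⟨d - 2, by omega⟩
  set q : ℝ → ℝ := fun x => ∑ i ∈ range (m + 2), θ i * x ^ (i + 1) with hq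
  have hΔ : Tendsto (fun k : ℕ => q (k + 1) - q k) atTop atBot :=
    ((tendsto_sum_mul_add_one_pow_sub_pow_atBot m θ (by simpa using hθ)).comp
      tendsto_natCast_atTop_atTop).congr fun k => by
        simp only [Function.comp_apply, hq, ← sum_sub_distrib, mul_sub]
  have hρ : Tendsto (fun k : ℕ => Real.exp (q ↑(k + 1)) / Real.exp (q k)) atTop (𝓝 0) := by
    refine (Real.tendsto_exp_atBot.comp hΔ).congr fun k => ?_
    rw [Function.comp_apply, Real.exp_sub, Nat.cast_succ]
  have hlim := tendsto_abs_sub_mul_one_sub_cdf_div (u := fun k => Real.exp (q k))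
    (fun _ => Real.exp_pos _) hρ (by simpa only [Nat.cast_add, Nat.cast_one] using hC) hp hP
  obtain ⟨M, hM⟩ := hlim.bddAbove_range
  exact ⟨hlim.limsup_eq.le, M, fun k _ => hM ⟨k, rfl⟩⟩
end

section
/- A random variable X : Ω → {0,...,m} (m ≥ 1, q ∈ (0,1)) has the binomial distribution Bin(m,q) if and only if its pmf ρ satisfies, for all k = 0,...,m: ρ(k) = Σ_{ℓ=k}^{m-1}(1 - (q/(1-q))·(m-ℓ)/(ℓ+1))·P(X = ℓ) + P(X = m). -/
/-!
The Stein identities at `k` and `k + 1` differ by a single term, so the whole family is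
equivalent to the first-order recurrence `ρ (ℓ + 1) = c ℓ * ρ ℓ` with
`c ℓ = q / (1 - q) * (m - ℓ) / (ℓ + 1)`, the ratio of consecutive binomial weights.
A solution of this recurrence is `ρ 0` times a fixed sequence, and the normalisation
`∑ ρ = 1` fixes `ρ 0`.
-/

open Finset

section FirstOrderRecurrence

variable {R : Type*} [CommRing R] (f c : ℕ → R) (m : ℕ)

theorem forall_eq_sum_Ico_one_sub_mul_iff :
    (∀ k ≤ m, f k = ∑ ℓ ∈ Ico k m, (1 - c ℓ) * f ℓ + f m) ↔
      ∀ ℓ < m, f (ℓ + 1) = c ℓ * f ℓ := by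
  constructor
  · intro h ℓ hℓ
    have hℓ' := h ℓ hℓ.le
    rw [sum_eq_sum_Ico_succ_bot hℓ, add_assoc, ← h (ℓ + 1) hℓ] at hℓ'
    linear_combination -hℓ'
  · intro h k hk
    have hterm : ∀ ℓ ∈ Ico k m, (1 - c ℓ) * f ℓ = -(f (ℓ + 1) - f ℓ) := by
      intro ℓ hℓ
      rw [h ℓ (mem_Ico.mp hℓ).2]
      ring
    rw [sum_congr rfl hterm, sum_neg_distrib, sum_Ico_sub f hk]
    ring

variable {f c m}

theorem eq_mul_prod_range_of_succ_eq (h : ∀ ℓ < m, f (ℓ + 1) = c ℓ * f ℓ) :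
    ∀ k ≤ m, f k = f 0 * ∏ ℓ ∈ range k, c ℓ := by
  intro k hk
  induction k with
  | zero => simp
  | succ k ih => rw [h k hk, ih (by omega), prod_range_succ]; ring

theorem eq_of_succ_eq_of_sum_eq [IsDomain R] {g : ℕ → R}
    (hf : ∀ ℓ < m, f (ℓ + 1) = c ℓ * f ℓ) (hg : ∀ ℓ < m, g (ℓ + 1) = c ℓ * g ℓ)
    (hsum : ∑ k ∈ range (m + 1), f k = ∑ k ∈ range (m + 1), g k)
    (hg0 : ∑ k ∈ range (m + 1), g k ≠ 0) :
    ∀ k ≤ m, f k = g k := by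
  set P : ℕ → R := fun k => ∏ ℓ ∈ range k, c ℓ
  have hsum_eq (u : ℕ → R) (hu : ∀ k ≤ m, u k = u 0 * P k) :
      ∑ k ∈ range (m + 1), u k = u 0 * ∑ k ∈ range (m + 1), P k := by
    rw [mul_sum]
    exact sum_congr rfl fun k hk => hu k (Nat.lt_succ_iff.mp (mem_range.mp hk))
  have hf' := eq_mul_prod_range_of_succ_eq hf
  have hg' := eq_mul_prod_range_of_succ_eq hg
  rw [hsum_eq f hf', hsum_eq g hg'] at hsum
  rw [hsum_eq g hg'] at hg0
  have h0 : f 0 = g 0 := mul_right_cancel₀ (right_ne_zero_of_mul hg0) hsum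
  intro k hk
  rw [hf' k hk, hg' k hk, h0]

end FirstOrderRecurrence

section BinomialWeight

variable {K : Type*} [Field K]

def binomialWeight (m : ℕ) (q : K) (k : ℕ) : K :=
  (m.choose k : K) * q ^ k * (1 - q) ^ (m - k)

theorem sum_binomialWeight (m : ℕ) (q : K) :
    ∑ k ∈ range (m + 1), binomialWeight m q k = 1 := by
  have h := (add_pow q (1 - q) m).symm
  rw [add_sub_cancel, one_pow] at h
  rw [← h]
  exact sum_congr rfl fun k _ => by unfold binomialWeight; ring

theorem binomialWeight_succ [CharZero K] {m k : ℕ} {q : K} (hq : q ≠ 1) (hk : k < m) :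
    binomialWeight m q (k + 1) =
      q / (1 - q) * ((m : K) - k) / ((k : K) + 1) * binomialWeight m q k := by
  have hq' : 1 - q ≠ 0 := sub_ne_zero.mpr hq.symm
  have hk1 : (k : K) + 1 ≠ 0 := by exact_mod_cast k.succ_ne_zero
  have hchoose : (m.choose (k + 1) : K) * ((k : K) + 1) = m.choose k * ((m : K) - k) := by
    have h := congrArg (Nat.cast (R := K)) (Nat.choose_succ_right_eq m k)
    push_cast [Nat.cast_sub hk.le] at h
    exact h
  have hpow : (1 - q) ^ (m - k) = (1 - q) ^ (m - (k + 1)) * (1 - q) := by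
    rw [← pow_succ]; congr 1; omega
  unfold binomialWeight
  rw [hpow, pow_succ]
  field_simp
  linear_combination q ^ k * q * hchoose

end BinomialWeight

theorem stmt_17_general (m : ℕ) (q : ℝ) (hq1 : q < 1)
    (ρ : ℕ → ℝ)
    (hρsum : ∑ k ∈ Finset.range (m + 1), ρ k = 1) :
    (∀ k ≤ m, ρ k = (Nat.choose m k : ℝ) * q ^ k * (1 - q) ^ (m - k)) ↔
    (∀ k ≤ m, ρ k = ∑ ℓ ∈ Finset.Ico k m,
      (1 - q / (1 - q) * ((m : ℝ) - (ℓ : ℝ)) / ((ℓ : ℝ) + 1)) * ρ ℓ + ρ m) := by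
  set c : ℕ → ℝ := fun ℓ => q / (1 - q) * ((m : ℝ) - ℓ) / ((ℓ : ℝ) + 1)
  have hbinom : ∀ ℓ < m, binomialWeight m q (ℓ + 1) = c ℓ * binomialWeight m q ℓ :=
    fun ℓ hℓ => binomialWeight_succ hq1.ne hℓ
  change (∀ k ≤ m, ρ k = binomialWeight m q k) ↔ _
  rw [forall_eq_sum_Ico_one_sub_mul_iff ρ c m]
  constructor
  · intro h ℓ hℓ
    rw [h ℓ hℓ.le, h (ℓ + 1) hℓ, hbinom ℓ hℓ]
  · intro h
    exact eq_of_succ_eq_of_sum_eq h hbinom (by rw [hρsum, sum_binomialWeight])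
      (by rw [sum_binomialWeight]; exact one_ne_zero)

/-- Forward-difference Stein characterization for the binomial distribution Bin(m,q). -/
theorem stmt_17 (m : ℕ) (hm : 1 ≤ m) (q : ℝ) (hq0 : 0 < q) (hq1 : q < 1)
    (ρ : ℕ → ℝ) (hρnonneg : ∀ k, 0 ≤ ρ k)
    (hρsum : ∑ k ∈ Finset.range (m + 1), ρ k = 1)
    (hρsupp : ∀ k : ℕ, m < k → ρ k = 0) :
    (∀ k ≤ m, ρ k = (Nat.choose m k : ℝ) * q ^ k * (1 - q) ^ (m - k)) ↔
    (∀ k ≤ m, ρ k = ∑ ℓ ∈ Finset.Ico k m,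
      (1 - q / (1 - q) * ((m : ℝ) - (ℓ : ℝ)) / ((ℓ : ℝ) + 1)) * ρ ℓ + ρ m) :=
  stmt_17_general m q hq1 ρ hρsum
end

section
/- Let p be a pmf on {L,...,R} with L finite satisfying (C1) and (C2), with CDF P, and let f_m be the Stein solution f_m(k) = (1/p(k))·Σ_{ℓ=L}^{k-1}(1{ℓ≤m} - P(m))p(ℓ). Then for all k ∈ {L,...,R-1}: |f_m(k+1)| ≤ 2·min{P(k), 1-P(k)}/p(k+1), and hence sup_k |(Δ⁺p(k)/p(k))·f_m(k+1)| < ∞. -/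
/-! `p(k+1) f_m(k+1)` is the partial sum over `{L, …, k}` of the weights
`(1{ℓ ≤ m} - P(m)) p(ℓ)`, which have total sum zero and absolute value at most `p(ℓ)`. Bounding
it directly gives `P(k)`; bounding minus the tail sum over `{k+1, …}` gives `1 - P(k)`. The
uniform bound on `(Δ⁺p(k)/p(k)) f_m(k+1)` is then exactly condition (C2). -/

open Finset

section Cdf

variable {p : ℤ → ℝ}

noncomputable def cdf (p : ℤ → ℝ) (k : ℤ) : ℝ := ∑' ℓ : ℤ, if ℓ ≤ k then p ℓ else 0

theorem cdf_eq_sum_Ico {L : ℤ} (hzero : ∀ ℓ < L, p ℓ = 0) (k : ℤ) :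
    cdf p k = ∑ ℓ ∈ Ico L (k + 1), p ℓ := by
  rw [cdf, tsum_eq_sum (s := Ico L (k + 1))]
  · refine sum_congr rfl fun ℓ hℓ => if_pos ?_
    rw [mem_Ico] at hℓ
    omega
  · intro ℓ hℓ
    rw [mem_Ico] at hℓ
    split_ifs with h
    · exact hzero ℓ (by omega)
    · rfl

theorem summable_ite_le (hnonneg : ∀ k, 0 ≤ p k) (hp : Summable p) (k : ℤ) :
    Summable fun ℓ : ℤ => if ℓ ≤ k then p ℓ else 0 :=
  hp.of_nonneg_of_le (fun ℓ => by split_ifs <;> simp [hnonneg ℓ])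
    (fun ℓ => by split_ifs <;> simp [hnonneg ℓ])

theorem cdf_nonneg (hnonneg : ∀ k, 0 ≤ p k) (k : ℤ) : 0 ≤ cdf p k :=
  tsum_nonneg fun ℓ => by split_ifs <;> simp [hnonneg ℓ]

theorem cdf_le_one (hnonneg : ∀ k, 0 ≤ p k) (hp : Summable p) (hsum : ∑' k, p k = 1) (k : ℤ) :
    cdf p k ≤ 1 :=
  hsum ▸ (summable_ite_le hnonneg hp k).tsum_le_tsum
    (fun ℓ => by split_ifs <;> simp [hnonneg ℓ]) hp

end Cdf

theorem abs_sum_le_min_of_tsum_eq_zero {α : Type*} {g p : α → ℝ} (hp : Summable p)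
    (hp1 : ∑' a, p a = 1) (hg0 : ∑' a, g a = 0) (hgp : ∀ a, |g a| ≤ p a) (s : Finset α) :
    |∑ a ∈ s, g a| ≤ min (∑ a ∈ s, p a) (1 - ∑ a ∈ s, p a) := by
  refine le_min ((abs_sum_le_sum_abs g s).trans (sum_le_sum fun a _ => hgp a)) ?_
  -- Since `∑ g = 0`, the sum over `s` is minus the sum over the complement of `s`.
  have hg : Summable g := Summable.of_norm_bounded hp hgp
  have hsplit_g := hg.sum_add_tsum_compl (s := s)
  have hsplit_p := hp.sum_add_tsum_compl (s := s)
  have htail : |∑' a : ((s : Set α)ᶜ : Set α), g a| ≤ ∑' a : ((s : Set α)ᶜ : Set α), p a :=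
    tsum_of_norm_bounded (f := fun a : ((s : Set α)ᶜ : Set α) => g a) (hp.subtype _).hasSum
      fun a => hgp a
  rw [hg0] at hsplit_g
  rw [hp1] at hsplit_p
  rw [show ∑ a ∈ s, g a = -∑' a : ((s : Set α)ᶜ : Set α), g a by linarith, abs_neg]
  linarith

theorem abs_sum_Ico_stein_le {p : ℤ → ℝ} {L : ℤ} (hnonneg : ∀ k, 0 ≤ p k) (hp : Summable p)
    (hsum : ∑' k, p k = 1) (hzero : ∀ ℓ < L, p ℓ = 0) (m k : ℤ) :
    |∑ ℓ ∈ Ico L (k + 1), ((if ℓ ≤ m then (1 : ℝ) else 0) - cdf p m) * p ℓ|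
      ≤ min (cdf p k) (1 - cdf p k) := by
  have hPm0 := cdf_nonneg hnonneg m
  have hPm1 := cdf_le_one hnonneg hp hsum m
  rw [cdf_eq_sum_Ico hzero k]
  refine abs_sum_le_min_of_tsum_eq_zero hp hsum ?_ (fun ℓ => ?_) _
  · have hweight : (fun ℓ => ((if ℓ ≤ m then (1 : ℝ) else 0) - cdf p m) * p ℓ)
        = fun ℓ => (if ℓ ≤ m then p ℓ else 0) - cdf p m * p ℓ := by
      funext ℓ
      split_ifs <;> ring
    rw [hweight, (summable_ite_le hnonneg hp m).tsum_sub (hp.mul_left _), tsum_mul_left, hsum,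
      mul_one]
    exact sub_self (cdf p m)
  · rw [abs_mul, abs_of_nonneg (hnonneg ℓ)]
    refine mul_le_of_le_one_left (hnonneg ℓ) (abs_le.2 ⟨?_, ?_⟩) <;> split_ifs <;> linarith

theorem abs_sub_div_mul_le {a b c x : ℝ} (ha : 0 ≤ a) (hb : 0 ≤ b) (hc : 0 ≤ c)
    (hx : |x| ≤ c / a) : |(a - b) / b * x| ≤ |(a - b) * c / (b * a)| :=
  calc |(a - b) / b * x| = |a - b| / b * |x| := by rw [abs_mul, abs_div, abs_of_nonneg hb]
    _ ≤ |a - b| / b * (c / a) := by gcongr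
    _ = |(a - b) * c / (b * a)| := by
      rw [abs_div, abs_mul, abs_of_nonneg hc, abs_of_nonneg (mul_nonneg hb ha)]
      ring

/-- Bounds on the Stein-equation solution f_m: `|f_m(k+1)| ≤ 2 min{P(k),1-P(k)}/p(k+1)` on
`{L,...,R-1}`, and hence `(Δ⁺p(k)/p(k))·f_m(k+1)` is uniformly bounded. -/
theorem stmt_19 (p : ℤ → ℝ) (L : ℤ) (R : WithTop ℤ)
    (hsupp : ∀ k : ℤ, 0 < p k ↔ (L ≤ k ∧ (k : WithTop ℤ) ≤ R))
    (hnonneg : ∀ k, 0 ≤ p k)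
    (hsum : ∑' k : ℤ, p k = 1)
    (hC2 : ∃ M : ℝ, ∀ k : ℤ, L ≤ k → ((k + 1 : ℤ) : WithTop ℤ) ≤ R →
      |(p (k + 1) - p k) * min (∑' ℓ : ℤ, if ℓ ≤ k then p ℓ else 0)
        (1 - ∑' ℓ : ℤ, if ℓ ≤ k then p ℓ else 0) / (p k * p (k + 1))| ≤ M)
    (m : ℤ) (Pm : ℝ) (hPm : Pm = ∑' ℓ : ℤ, if ℓ ≤ m then p ℓ else 0)
    (f : ℤ → ℝ)
    (hf : ∀ k : ℤ, f k = (1 / p k) *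
      ∑ ℓ ∈ Finset.Ico L k, ((if ℓ ≤ m then (1 : ℝ) else 0) - Pm) * p ℓ) :
    (∀ k : ℤ, L ≤ k → ((k + 1 : ℤ) : WithTop ℤ) ≤ R →
      |f (k + 1)| ≤ 2 * min (∑' ℓ : ℤ, if ℓ ≤ k then p ℓ else 0)
        (1 - ∑' ℓ : ℤ, if ℓ ≤ k then p ℓ else 0) / p (k + 1)) ∧
    ∃ M : ℝ, ∀ k : ℤ, L ≤ k → (k : WithTop ℤ) ≤ R →
      |(p (k + 1) - p k) / p k * f (k + 1)| ≤ M := by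
  obtain ⟨M, hM⟩ := hC2
  subst hPm
  have hp : Summable p := by
    by_contra h
    simp [tsum_eq_zero_of_not_summable h] at hsum
  have hvanish : ∀ k, ¬(L ≤ k ∧ (k : WithTop ℤ) ≤ R) → p k = 0 := fun k hk =>
    le_antisymm (not_lt.1 fun h => hk ((hsupp k).1 h)) (hnonneg k)
  have hmin : ∀ k, 0 ≤ min (cdf p k) (1 - cdf p k) := fun k =>
    le_min (cdf_nonneg hnonneg k) (sub_nonneg.2 (cdf_le_one hnonneg hp hsum k))
  -- `1 / 0 = 0` makes this hold for every `k`, also where `p (k + 1)` vanishes.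
  have hf_le : ∀ k, |f (k + 1)| ≤ min (cdf p k) (1 - cdf p k) / p (k + 1) := fun k => by
    rw [hf, abs_mul, abs_of_nonneg (one_div_nonneg.2 (hnonneg _)), one_div_mul_eq_div]
    exact div_le_div_of_nonneg_right (abs_sum_Ico_stein_le hnonneg hp hsum
      (fun ℓ hℓ => hvanish ℓ fun h => hℓ.not_ge h.1) m k) (hnonneg _)
  refine ⟨fun k _ _ => (hf_le k).trans ?_, max M 0, fun k hL _ => ?_⟩
  · exact div_le_div_of_nonneg_right (le_mul_of_one_le_left (hmin k) one_le_two) (hnonneg _)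
  · refine (abs_sub_div_mul_le (hnonneg _) (hnonneg _) (hmin k) (hf_le k)).trans ?_
    by_cases hR : ((k + 1 : ℤ) : WithTop ℤ) ≤ R
    · exact (hM k hL hR).trans (le_max_left _ _)
    · simp [hvanish (k + 1) fun h => hR h.2]
end
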